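/- arXiv:1109.6345 — 11 statements merged into one kernel-verified Lean document; each statement's English description precedes it below -/
import Mathlib

section
/- Every conditionally acyclic TCP-net N = ⟨V, cp, i, ci, cpt, cit⟩ contains at least one root variable, i.e., a variable X ∈ V such that for every Y ∈ V∖{X}: (Y,X) ∉ cp, (Y,X) ∉ i, and no ci-arc of N is incident to X. -/
universe u v

/-- A TCP-net over a set of variables `V` with domains `D`.
`cp` are the directed cp-arcs, `iarc` the directed i-arcs, `ci` the
(symmetric) ci-arcs with selector sets `sel`.  `cpt X o` is the strict
partial order on `D X` prescribed by the CPT of `X` given the values of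
the parents of `X` in `o` (it only depends on those values), and
`cit X Y o` means that the CIT of the ci-arc `(X,Y)` declares `X` more
important than `Y` on the restriction of `o` to the selector set
`sel X Y` (it only depends on those values). -/
structure TCPNet (V : Type u) (D : V → Type v) where
  cp : V → V → Prop
  iarc : V → V → Prop
  ci : V → V → Prop
  sel : V → V → Set V
  cpt : (X : V) → ((Y : V) → D Y) → D X → D X → Prop
  cit : V → V → ((Y : V) → D Y) → Prop
  cp_ne : ∀ X Y, cp X Y → X ≠ Y
  iarc_ne : ∀ X Y, iarc X Y → X ≠ Y
  ci_ne : ∀ X Y, ci X Y → X ≠ Y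
  ci_symm : ∀ X Y, ci X Y → ci Y X
  sel_symm : ∀ X Y, sel X Y = sel Y X
  sel_nonempty : ∀ X Y, ci X Y → (sel X Y).Nonempty
  sel_not_endpoint : ∀ X Y, ci X Y → X ∉ sel X Y ∧ Y ∉ sel X Y
  iarc_indep : ∀ X Y, iarc X Y → ¬ cp X Y ∧ ¬ cp Y X
  ci_indep : ∀ X Y, ci X Y → ¬ cp X Y ∧ ¬ cp Y X
  cpt_irrefl : ∀ X o a, ¬ cpt X o a a
  cpt_trans : ∀ X o a b c, cpt X o a b → cpt X o b c → cpt X o a c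
  cpt_local : ∀ X o o', (∀ Y, cp Y X → o Y = o' Y) → ∀ a b, (cpt X o a b ↔ cpt X o' a b)
  cit_ci : ∀ X Y o, cit X Y o → ci X Y
  cit_antisymm : ∀ X Y o, cit X Y o → ¬ cit Y X o
  cit_local : ∀ X Y o o', (∀ Z ∈ sel X Y, o Z = o' Z) → (cit X Y o ↔ cit X Y o')

variable {V : Type u} {D : V → Type v}

/-- A preference order: a strict partial order (irreflexive and transitive). -/
def IsPrefOrder {α : Sort*} (r : α → α → Prop) : Prop :=
  (∀ a, ¬ r a a) ∧ ∀ a b c, r a b → r b c → r a c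

/-- A preference order `pref` on outcomes satisfies the TCP-net `N`:
(i) it satisfies every CPT, (ii) every i-arc, and (iii) every CIT entry. -/
def TCPNet.Satisfies (N : TCPNet V D)
    (pref : ((X : V) → D X) → ((X : V) → D X) → Prop) : Prop :=
  (∀ (X : V) (o o' : (Y : V) → D Y),
      (∀ Y, Y ≠ X → o Y = o' Y) → N.cpt X o (o X) (o' X) → pref o o') ∧
  (∀ (X Y : V) (o o' : (Z : V) → D Z), N.iarc X Y →
      (∀ Z, Z ≠ X → Z ≠ Y → o Z = o' Z) → N.cpt X o (o X) (o' X) → pref o o') ∧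
  (∀ (X Y : V) (o o' : (Z : V) → D Z), N.cit X Y o →
      (∀ Z, Z ≠ X → Z ≠ Y → o Z = o' Z) → N.cpt X o (o X) (o' X) → pref o o')

def TCPNet.Satisfiable (N : TCPNet V D) : Prop :=
  ∃ pref, IsPrefOrder pref ∧ N.Satisfies pref

def TCPNet.Entails (N : TCPNet V D) (o o' : (X : V) → D X) : Prop :=
  ∀ pref, IsPrefOrder pref → N.Satisfies pref → pref o o'

/-- The directed edges of the dependency graph `N*`: cp-arcs, i-arcs, and
the edges from each selector variable of a ci-arc to the endpoints of that arc. -/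
def TCPNet.dirEdge (N : TCPNet V D) (X Y : V) : Prop :=
  N.cp X Y ∨ N.iarc X Y ∨ ∃ W, N.ci Y W ∧ X ∈ N.sel Y W

/-- The edges of the `w`-directed graph of `N*`. -/
def TCPNet.wEdge (N : TCPNet V D) (w : (X : V) → D X) (X Y : V) : Prop :=
  N.dirEdge X Y ∨ N.cit X Y w

/-- Conditional acyclicity: every `w`-directed graph of `N*` is acyclic. -/
def TCPNet.CondAcyclic (N : TCPNet V D) : Prop :=
  ∀ (w : (X : V) → D X) (X : V), ¬ Relation.TransGen (N.wEdge w) X X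

theorem exists_forall_not_rel_of_acyclic {α : Type*} [Finite α] [Nonempty α] {r : α → α → Prop}
    (hr : ∀ x, ¬ Relation.TransGen r x x) : ∃ x, ∀ y, ¬ r y x := by
  have : IsStrictOrder α (Relation.TransGen r) :=
    { irrefl := hr, trans := fun _ _ _ => Relation.TransGen.trans }
  obtain ⟨x, -, hmin⟩ := (Finite.wellFounded_of_trans_of_irrefl (Relation.TransGen r)).has_min
    Set.univ Set.univ_nonempty
  exact ⟨x, fun y hyx => hmin y trivial (Relation.TransGen.single hyx)⟩

namespace TCPNet

def IsRoot (N : TCPNet V D) (X : V) : Prop :=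
  ∀ Y, Y ≠ X → ¬ N.cp Y X ∧ ¬ N.iarc Y X ∧ ¬ N.ci X Y

theorem dirEdge_le_wEdge (N : TCPNet V D) (w : (X : V) → D X) : N.dirEdge ≤ N.wEdge w :=
  fun _ _ => Or.inl

/-- A ci-arc at `X` yields an incoming edge of `N*` at `X` from any of its selector variables. -/
theorem isRoot_of_forall_not_dirEdge (N : TCPNet V D) {X : V} (hX : ∀ Y, ¬ N.dirEdge Y X) :
    N.IsRoot X := by
  refine fun Y _ => ⟨fun h => hX Y (Or.inl h), fun h => hX Y (Or.inr (Or.inl h)), fun h => ?_⟩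
  obtain ⟨Z, hZ⟩ := N.sel_nonempty X Y h
  exact hX Z (Or.inr (Or.inr ⟨Y, h, hZ⟩))

end TCPNet

theorem stmt2_general [Fintype V] [Nonempty V] [∀ X, Nontrivial (D X)]
    (N : TCPNet V D) (hN : N.CondAcyclic) :
    ∃ X : V, ∀ Y : V, Y ≠ X → ¬ N.cp Y X ∧ ¬ N.iarc Y X ∧ ¬ N.ci X Y := by
  let w : (X : V) → D X := fun X => Classical.arbitrary (D X)
  obtain ⟨X, hX⟩ := exists_forall_not_rel_of_acyclic (hN w)
  exact ⟨X, N.isRoot_of_forall_not_dirEdge fun Y h => hX Y (N.dirEdge_le_wEdge w Y X h)⟩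

/-- every conditionally acyclic TCP-net contains a root
variable, i.e. one with no incoming cp-arc, no incoming i-arc, and no
incident ci-arc. -/
theorem stmt2 [Fintype V] [Nonempty V] [∀ X, Fintype (D X)] [∀ X, Nontrivial (D X)]
    (N : TCPNet V D) (hN : N.CondAcyclic) :
    ∃ X : V, ∀ Y : V, Y ≠ X → ¬ N.cp Y X ∧ ¬ N.iarc Y X ∧ ¬ N.ci X Y :=
  stmt2_general N hN
end

section
/- Every conditionally acyclic TCP-net is satisfiable; moreover, every conditionally acyclic TCP-net N is satisfied by some strict total order on D(V). -/
universe u v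

variable {V : Type u} {D : V → Type v}

/-! Fix an outcome `o`. Conditional acyclicity makes the `o`-directed graph acyclic, so the
variables can be visited in an order in which every variable comes after all its predecessors in
that graph; the variable chosen at each step depends only on the values `o` gives to the variables
already visited. Rank the values of each variable by a linear extension of its CPT order, which
depends only on the values of its parents (visited earlier), and compare outcomes
lexicographically by the ranks read along their visiting orders. Two outcomes that agree on the
first `k` visited variables visit the same `k + 1`-st one, which makes this a strict total order,
and a flip that improves `X` while changing only children of `X` first differs at `X`. -/

theorem exists_injective_nat_of_isStrictOrder {α : Type*} [Finite α] (r : α → α → Prop)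
    [IsStrictOrder α r] : ∃ f : α → ℕ, Function.Injective f ∧ ∀ a b, r a b → f a < f b := by
  let := partialOrderOfSO r
  have : Finite (LinearExtension α) := inferInstanceAs (Finite α)
  obtain ⟨e⟩ := nonempty_orderEmbedding_of_finite_infinite (LinearExtension α) ℕ
  have hinj : Function.Injective (e ∘ toLinearExtension) := e.injective.comp fun _ _ => id
  have hmono := (e.monotone.comp toLinearExtension.monotone).strictMono_of_injective hinj
  exact ⟨_, hinj, fun _ _ hab => hmono hab⟩

namespace TCPNet

variable (N : TCPNet V D)

instance isStrictOrder_cpt (X : V) (o : ∀ Y, D Y) : IsStrictOrder (D X) (N.cpt X o) where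
  irrefl := N.cpt_irrefl X o
  trans := N.cpt_trans X o

lemma dirEdge_of_mem_sel {X Z W : V} (h : N.ci X Z) (hW : W ∈ N.sel X Z) : N.dirEdge W Z :=
  Or.inr (Or.inr ⟨X, N.ci_symm _ _ h, by rwa [N.sel_symm Z X]⟩)

section Rank

variable [∀ X, Finite (D X)]

noncomputable def rank (X : V) (o : ∀ Y, D Y) : D X → ℕ :=
  (exists_injective_nat_of_isStrictOrder (N.cpt X o)).choose

variable {N}

lemma rank_injective (X : V) (o : ∀ Y, D Y) : Function.Injective (N.rank X o) :=
  (exists_injective_nat_of_isStrictOrder (N.cpt X o)).choose_spec.1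

lemma rank_lt_rank {X : V} {o : ∀ Y, D Y} {a b : D X} (h : N.cpt X o a b) :
    N.rank X o a < N.rank X o b :=
  (exists_injective_nat_of_isStrictOrder (N.cpt X o)).choose_spec.2 a b h

lemma rank_congr {X : V} {o o' : ∀ Y, D Y} (h : ∀ Y, N.cp Y X → o Y = o' Y) :
    N.rank X o = N.rank X o' := by
  have hcpt : N.cpt X o = N.cpt X o' := funext₂ fun a b => propext (N.cpt_local X o o' h a b)
  unfold rank
  congr 1
  rw [hcpt]

end Rank

section Visit

def Ready (U : Finset V) (o : ∀ X, D X) (Z : V) : Prop :=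
  Z ∉ U ∧ ∀ W, N.wEdge o W Z → W ∈ U

variable {N}

lemma Ready.of_agree {U : Finset V} {o o' : ∀ X, D X} (h : ∀ W ∈ U, o W = o' W) {Z : V}
    (hZ : N.Ready U o Z) : N.Ready U o' Z := by
  refine ⟨hZ.1, fun W hW => ?_⟩
  rcases hW with hdir | hcit
  · exact hZ.2 W (Or.inl hdir)
  · -- the selectors of the ci-arc `(W, Z)` are predecessors of `Z`, so `o` and `o'` agree on them
    have hsel : ∀ S ∈ N.sel W Z, o S = o' S := fun S hS =>
      h S (hZ.2 S (Or.inl (N.dirEdge_of_mem_sel (N.cit_ci W Z o' hcit) hS)))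
    exact hZ.2 W (Or.inr ((N.cit_local W Z o o' hsel).mpr hcit))

lemma ready_congr {U : Finset V} {o o' : ∀ X, D X} (h : ∀ W ∈ U, o W = o' W) :
    N.Ready U o = N.Ready U o' :=
  funext fun _ => propext ⟨Ready.of_agree h, Ready.of_agree fun W hW => (h W hW).symm⟩

lemma exists_ready [Fintype V] (hN : N.CondAcyclic) (o : ∀ X, D X) {U : Finset V}
    (hU : U ≠ Finset.univ) : ∃ Z, N.Ready U o Z := by
  have : IsTrans V (Relation.TransGen (N.wEdge o)) := ⟨fun _ _ _ => Relation.TransGen.trans⟩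
  have : Std.Irrefl (Relation.TransGen (N.wEdge o)) := ⟨hN o⟩
  obtain ⟨Z, hZ, hmin⟩ :=
    (Finite.wellFounded_of_trans_of_irrefl (Relation.TransGen (N.wEdge o))).has_min {Z | Z ∉ U}
      (by simpa [Set.Nonempty, Finset.eq_univ_iff_forall] using hU)
  exact ⟨Z, hZ, fun W hW => by_contra fun hWU => hmin W hWU (Relation.TransGen.single hW)⟩

variable (N) [Nonempty V]

-- By `ready_congr`, `next U o` depends only on the values of `o` on `U`.
noncomputable def next (U : Finset V) (o : ∀ X, D X) : V :=
  Classical.epsilon (N.Ready U o)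

open Classical in
noncomputable def visited (o : ∀ X, D X) : ℕ → Finset V
  | 0 => ∅
  | k + 1 => insert (N.next (visited o k) o) (visited o k)

noncomputable def visit (o : ∀ X, D X) (k : ℕ) : V :=
  N.next (N.visited o k) o

variable {N}

open Classical in
lemma visited_succ (o : ∀ X, D X) (k : ℕ) :
    N.visited o (k + 1) = insert (N.visit o k) (N.visited o k) :=
  rfl

lemma mem_visited {o : ∀ X, D X} {k : ℕ} {W : V} :
    W ∈ N.visited o k ↔ ∃ j < k, N.visit o j = W := by
  induction k with
  | zero => simp [visited]
  | succ k ih =>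
    classical
    rw [visited_succ, Finset.mem_insert, ih]
    constructor
    · rintro (rfl | ⟨j, hj, rfl⟩)
      exacts [⟨k, k.lt_succ_self, rfl⟩, ⟨j, hj.trans k.lt_succ_self, rfl⟩]
    · rintro ⟨j, hj, rfl⟩
      rcases Nat.lt_succ_iff_lt_or_eq.1 hj with hj | rfl
      exacts [Or.inr ⟨j, hj, rfl⟩, Or.inl rfl]

lemma visited_mono {o : ∀ X, D X} {j k : ℕ} (h : j ≤ k) : N.visited o j ⊆ N.visited o k :=
  fun _ hW => match mem_visited.1 hW with
    | ⟨i, hi, hiW⟩ => mem_visited.2 ⟨i, hi.trans_le h, hiW⟩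

lemma visit_mem_visited {o : ∀ X, D X} {j k : ℕ} (h : j < k) : N.visit o j ∈ N.visited o k :=
  mem_visited.2 ⟨j, h, rfl⟩

lemma visited_eq_of_agree {o o' : ∀ X, D X} :
    ∀ {k : ℕ}, (∀ W ∈ N.visited o k, o W = o' W) → N.visited o k = N.visited o' k
  | 0, _ => rfl
  | k + 1, h => by
    have hk : ∀ W ∈ N.visited o k, o W = o' W := fun W hW => h W (visited_mono k.le_succ hW)
    rw [visited, visited, ← visited_eq_of_agree hk, next, next, ready_congr hk]

lemma visit_eq_of_agree {o o' : ∀ X, D X} {k : ℕ} (h : ∀ W ∈ N.visited o k, o W = o' W) :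
    N.visit o' k = N.visit o k := by
  rw [visit, visit, ← visited_eq_of_agree h, next, next, ready_congr h]

variable [Fintype V]

lemma ready_visit (hN : N.CondAcyclic) (o : ∀ X, D X) {k : ℕ}
    (h : N.visited o k ≠ Finset.univ) : N.Ready (N.visited o k) o (N.visit o k) :=
  Classical.epsilon_spec (exists_ready hN o h)

lemma mem_visited_of_wEdge (hN : N.CondAcyclic) {o : ∀ X, D X} {k : ℕ} {W : V}
    (h : N.wEdge o W (N.visit o k)) : W ∈ N.visited o k := by
  by_cases hU : N.visited o k = Finset.univ
  · exact hU ▸ Finset.mem_univ W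
  · exact (ready_visit hN o hU).2 W h

lemma min_card_le_card_visited (hN : N.CondAcyclic) (o : ∀ X, D X) (k : ℕ) :
    min k (Fintype.card V) ≤ (N.visited o k).card := by
  induction k with
  | zero => simp
  | succ k ih =>
    by_cases hU : N.visited o k = Finset.univ
    · have : N.visited o (k + 1) = Finset.univ := Finset.eq_univ_of_forall fun _ =>
        visited_mono k.le_succ (hU ▸ Finset.mem_univ _)
      rw [this, Finset.card_univ]
      exact min_le_right _ _
    · classical
      rw [visited_succ, Finset.card_insert_of_notMem (ready_visit hN o hU).1]
      omega

lemma visited_card_eq_univ (hN : N.CondAcyclic) (o : ∀ X, D X) :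
    N.visited o (Fintype.card V) = Finset.univ :=
  Finset.eq_univ_of_card _ <| le_antisymm (Finset.card_le_univ _)
    (by simpa using min_card_le_card_visited hN o (Fintype.card V))

lemma exists_visit_eq (hN : N.CondAcyclic) (o : ∀ X, D X) (W : V) : ∃ k, N.visit o k = W :=
  match mem_visited.1 (visited_card_eq_univ hN o ▸ Finset.mem_univ W) with
  | ⟨k, _, hk⟩ => ⟨k, hk⟩

end Visit

section LexPref

variable [Nonempty V] [∀ X, Finite (D X)]

noncomputable def code (o : ∀ X, D X) (k : ℕ) : ℕ :=
  N.rank (N.visit o k) o (o (N.visit o k))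

def lexPref (o o' : ∀ X, D X) : Prop :=
  toLex (N.code o) < toLex (N.code o')

lemma isPrefOrder_lexPref : IsPrefOrder N.lexPref :=
  ⟨fun _ => lt_irrefl _, fun _ _ _ => lt_trans⟩

variable {N} [Fintype V]

lemma code_eq_of_agree (hN : N.CondAcyclic) {o o' : ∀ X, D X} {k : ℕ}
    (h : ∀ W ∈ N.visited o k, o W = o' W) :
    N.code o' k = N.rank (N.visit o k) o (o' (N.visit o k)) := by
  rw [code, visit_eq_of_agree h,
    rank_congr fun Y hY => (h Y (mem_visited_of_wEdge hN (Or.inl (Or.inl hY)))).symm]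

lemma agree_of_code_eq (hN : N.CondAcyclic) {o o' : ∀ X, D X} (h : N.code o = N.code o') :
    ∀ k, ∀ W ∈ N.visited o k, o W = o' W
  | 0 => by simp [visited]
  | k + 1 => by
    have hk := agree_of_code_eq hN h k
    intro W hW
    classical
    rcases Finset.mem_insert.1 (visited_succ o k ▸ hW) with rfl | hW
    · exact rank_injective _ _ ((congrFun h k).trans (code_eq_of_agree hN hk))
    · exact hk W hW

lemma code_injective (hN : N.CondAcyclic) : Function.Injective N.code := fun o _ h =>
  funext fun W => agree_of_code_eq hN h _ W (visited_card_eq_univ hN o ▸ Finset.mem_univ W)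

lemma lexPref_total (hN : N.CondAcyclic) {o o' : ∀ X, D X} (h : o ≠ o') :
    N.lexPref o o' ∨ N.lexPref o' o :=
  lt_or_gt_of_ne (toLex.injective.ne ((code_injective hN).ne h))

lemma lexPref_of_flip (hN : N.CondAcyclic) {X : V} {o o' : ∀ Y, D Y}
    (hX : N.cpt X o (o X) (o' X)) (hchild : ∀ Z, Z ≠ X → o Z ≠ o' Z → N.wEdge o X Z) :
    N.lexPref o o' := by
  classical
  let k := Nat.find (exists_visit_eq hN o X)
  have hXk : N.visit o k = X := Nat.find_spec (exists_visit_eq hN o X)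
  have hnotX : ∀ j < k, N.visit o j ≠ X := fun j hj => Nat.find_min _ hj
  have hagree : ∀ W ∈ N.visited o k, o W = o' W := by
    intro W hW
    obtain ⟨j, hj, rfl⟩ := mem_visited.1 hW
    by_contra hne
    obtain ⟨i, hi, hiX⟩ := mem_visited.1 (mem_visited_of_wEdge hN (hchild _ (hnotX j hj) hne))
    exact hnotX i (hi.trans hj) hiX
  refine ⟨k, fun j hj => ?_, ?_⟩
  · show N.code o j = N.code o' j
    rw [code_eq_of_agree hN fun W hW => hagree W (visited_mono hj.le hW),
      ← hagree _ (visit_mem_visited hj), code]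
  · show N.code o k < N.code o' k
    rw [code_eq_of_agree hN hagree, code]
    exact hXk ▸ rank_lt_rank hX

lemma satisfies_lexPref (hN : N.CondAcyclic) : N.Satisfies N.lexPref := by
  have hchild : ∀ {X Y : V} {o o' : ∀ Z, D Z}, N.wEdge o X Y →
      (∀ Z, Z ≠ X → Z ≠ Y → o Z = o' Z) → ∀ Z, Z ≠ X → o Z ≠ o' Z → N.wEdge o X Z :=
    fun hXY h Z hZX hne => by_contra fun hZ => hne (h Z hZX fun hZY => hZ (hZY ▸ hXY))
  refine ⟨fun X o o' h hc => lexPref_of_flip hN hc fun Z hZ hne => absurd (h Z hZ) hne,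
    fun X Y o o' hi h hc => lexPref_of_flip hN hc (hchild (Or.inl (Or.inr (Or.inl hi))) h),
    fun X Y o o' hcit h hc => lexPref_of_flip hN hc (hchild (Or.inr hcit) h)⟩

end LexPref

end TCPNet

theorem stmt3_general [Fintype V] [∀ X, Fintype (D X)]
    (N : TCPNet V D) (hN : N.CondAcyclic) :
    N.Satisfiable ∧
      ∃ pref : ((X : V) → D X) → ((X : V) → D X) → Prop,
        IsPrefOrder pref ∧ (∀ o o', o ≠ o' → pref o o' ∨ pref o' o) ∧
        N.Satisfies pref := by
  rcases isEmpty_or_nonempty V with hV | hV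
  · have hpo : IsPrefOrder fun _ _ : (∀ X, D X) => False := ⟨fun _ h => h, fun _ _ _ h _ => h⟩
    have hsat : N.Satisfies fun _ _ => False :=
      ⟨fun X => isEmptyElim X, fun X => isEmptyElim X, fun X => isEmptyElim X⟩
    exact ⟨⟨_, hpo, hsat⟩, _, hpo, fun o o' h => (h (Subsingleton.elim o o')).elim, hsat⟩
  · exact ⟨⟨_, N.isPrefOrder_lexPref, N.satisfies_lexPref hN⟩, _, N.isPrefOrder_lexPref,
      fun _ _ => N.lexPref_total hN, N.satisfies_lexPref hN⟩

/-- every conditionally acyclic TCP-net is satisfiable;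
moreover, it is satisfied by some strict total order on the outcomes. -/
theorem stmt3 [Fintype V] [∀ X, Fintype (D X)] [∀ X, Nontrivial (D X)]
    (N : TCPNet V D) (hN : N.CondAcyclic) :
    N.Satisfiable ∧
      ∃ pref : ((X : V) → D X) → ((X : V) → D X) → Prop,
        IsPrefOrder pref ∧ (∀ o o', o ≠ o' → pref o o' ∨ pref o' o) ∧
        N.Satisfies pref :=
  stmt3_general N hN
end

section
/- Let V = {A, B, C} with D(A) = {a, ā}, D(B) = {b, b̄}, D(C) = {c, c̄}, and let N be the TCP-net with cp = {(A,C)}, i = ∅, and ci = {(A,B)} with selector set S(A,B) = {C}; CPT(A): a ≻ ā; CPT(B): b ≻ b̄; CPT(C): given A = a, c̄ ≻ c, and given A = ā, c ≻ c̄; CIT(A,B): given C = c, A is more important than B, and given C = c̄, B is more important than A. Then no strict partial order on D(V) satisfies N, i.e., N is unsatisfiable (even though every way of orienting the ci-arc makes the graph of N itself acyclic). -/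
universe u v

variable {V : Type u} {D : V → Type v}

inductive TCPNet.Worsens (N : TCPNet V D) : ((X : V) → D X) → ((X : V) → D X) → Prop
  | cpt (X : V) {o o' : (Y : V) → D Y} :
      (∀ Y, Y ≠ X → o Y = o' Y) → N.cpt X o (o X) (o' X) → N.Worsens o o'
  | iarc (X Y : V) {o o' : (Z : V) → D Z} : N.iarc X Y →
      (∀ Z, Z ≠ X → Z ≠ Y → o Z = o' Z) → N.cpt X o (o X) (o' X) → N.Worsens o o'
  | cit (X Y : V) {o o' : (Z : V) → D Z} : N.cit X Y o →
      (∀ Z, Z ≠ X → Z ≠ Y → o Z = o' Z) → N.cpt X o (o X) (o' X) → N.Worsens o o'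

theorem TCPNet.Satisfies.of_worsens {N : TCPNet V D}
    {pref : ((X : V) → D X) → ((X : V) → D X) → Prop} (h : N.Satisfies pref)
    {o o' : (X : V) → D X} : N.Worsens o o' → pref o o'
  | .cpt X hagree hcpt => h.1 X o o' hagree hcpt
  | .iarc X Y hiarc hagree hcpt => h.2.1 X Y o o' hiarc hagree hcpt
  | .cit X Y hcit hagree hcpt => h.2.2 X Y o o' hcit hagree hcpt

theorem TCPNet.Satisfiable.not_transGen_worsens {N : TCPNet V D} (h : N.Satisfiable)
    (o : (X : V) → D X) : ¬ Relation.TransGen N.Worsens o o := by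
  obtain ⟨pref, ⟨hirrefl, htrans⟩, hsat⟩ := h
  suffices ∀ {o'}, Relation.TransGen N.Worsens o o' → pref o o' from
    fun hcycle => hirrefl o (this hcycle)
  intro o' hpath
  induction hpath with
  | single hstep => exact hsat.of_worsens hstep
  | tail _ hstep ih => exact htrans _ _ _ ih (hsat.of_worsens hstep)

/-- `A, B, C` are the variables `0, 1, 2`; the values `a, b, c` are `true`, and `ā, b̄, c̄` are
`false`. -/
theorem stmt4_general (N : TCPNet (Fin 3) (fun _ => Bool))
    (hcptA : ∀ o a b, N.cpt 0 o a b ↔ a = true ∧ b = false)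
    (hcptB : ∀ o a b, N.cpt 1 o a b ↔ a = true ∧ b = false)
    (hcptC : ∀ o a b, N.cpt 2 o a b ↔
      ((o 0 = true ∧ a = false ∧ b = true) ∨ (o 0 = false ∧ a = true ∧ b = false)))
    (hcitAB : ∀ o, N.cit 0 1 o ↔ o 2 = true)
    (hcitBA : ∀ o, N.cit 1 0 o ↔ o 2 = false) :
    ¬ N.Satisfiable := by
  intro hsat
  -- a b̄ c ≻ ā b c ≻ ā b c̄ ≻ a b̄ c̄ ≻ a b̄ c: the CIT swaps the importance of A and B
  -- exactly when CPT(C) reverses its preference, which closes a cycle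
  have h₁ : N.Worsens ![true, false, true] ![false, true, true] :=
    .cit 0 1 ((hcitAB _).2 rfl) (by decide) ((hcptA _ _ _).2 ⟨rfl, rfl⟩)
  have h₂ : N.Worsens ![false, true, true] ![false, true, false] :=
    .cpt 2 (by decide) ((hcptC _ _ _).2 (.inr ⟨rfl, rfl, rfl⟩))
  have h₃ : N.Worsens ![false, true, false] ![true, false, false] :=
    .cit 1 0 ((hcitBA _).2 rfl) (by decide) ((hcptB _ _ _).2 ⟨rfl, rfl⟩)
  have h₄ : N.Worsens ![true, false, false] ![true, false, true] :=
    .cpt 2 (by decide) ((hcptC _ _ _).2 (.inl ⟨rfl, rfl, rfl⟩))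
  exact hsat.not_transGen_worsens _ (.tail (.tail (.tail (.single h₁) h₂) h₃) h₄)

/-- the concrete TCP-net over the boolean variables
`A = 0`, `B = 1`, `C = 2` with cp-arc `(A,C)`, ci-arc `(A,B)` with selector
`{C}`, CPTs `a ≻ ā`, `b ≻ b̄`, `(a : c̄ ≻ c, ā : c ≻ c̄)` and CIT
`(c : A ▷ B, c̄ : B ▷ A)` is unsatisfiable (here `a, b, c` are encoded by
`true` and `ā, b̄, c̄` by `false`). -/
theorem stmt4 (N : TCPNet (Fin 3) (fun _ => Bool))
    (hcp : ∀ X Y, N.cp X Y ↔ X = 0 ∧ Y = 2)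
    (hi : ∀ X Y, ¬ N.iarc X Y)
    (hci : ∀ X Y, N.ci X Y ↔ (X = 0 ∧ Y = 1) ∨ (X = 1 ∧ Y = 0))
    (hsel01 : N.sel 0 1 = {2})
    (hsel10 : N.sel 1 0 = {2})
    (hcptA : ∀ o a b, N.cpt 0 o a b ↔ a = true ∧ b = false)
    (hcptB : ∀ o a b, N.cpt 1 o a b ↔ a = true ∧ b = false)
    (hcptC : ∀ o a b, N.cpt 2 o a b ↔
      ((o 0 = true ∧ a = false ∧ b = true) ∨ (o 0 = false ∧ a = true ∧ b = false)))
    (hcitAB : ∀ o, N.cit 0 1 o ↔ o 2 = true)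
    (hcitBA : ∀ o, N.cit 1 0 o ↔ o 2 = false)
    (hcitOther : ∀ X Y o, N.cit X Y o → (X = 0 ∧ Y = 1) ∨ (X = 1 ∧ Y = 0)) :
    ¬ N.Satisfiable :=
  stmt4_general N hcptA hcptB hcptC hcitAB hcitBA
end

section
/- Let N be a TCP-net whose dependency graph N* contains no directed cycle consisting solely of its directed edges. Then N is conditionally acyclic if and only if every semi-directed cycle of N* is conditionally acyclic. -/
universe u v

variable {V : Type u} {D : V → Type v}

/-- The cyclic successor on `Fin n`. -/
def finNext {n : ℕ} (i : Fin n) : Fin n := ⟨(i.val + 1) % n, Nat.mod_lt _ i.pos⟩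

/-- `v`, `ed` describe a semi-directed cycle of the dependency graph of `N`:
`v` lists the vertices of a simple cycle (in the traversal direction, which is
the direction of the cycle if it contains directed edges), and `ed i` tells
whether the edge from `v i` to `v (i+1)` is a directed edge of `N*` (`true`),
or a ci-arc (`false`).  Not all edges are directed, and all directed edges
point in the traversal direction. -/
def IsSemiDirCycle (N : TCPNet V D) {n : ℕ} (v : Fin n → V) (ed : Fin n → Bool) : Prop :=
  2 ≤ n ∧ Function.Injective v ∧
    (∀ i, ed i = true → N.dirEdge (v i) (v (finNext i))) ∧
    (∀ i, ed i = false → N.ci (v i) (v (finNext i))) ∧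
    (∃ i, ed i = false)

/-- The semi-directed cycle `(v, ed)` is conditionally directed: some assignment
orients all its ci-arcs so that it becomes a directed cycle (all edges in the
traversal direction or, when all edges are ci-arcs, possibly all in the
opposite direction). -/
def CondDirected (N : TCPNet V D) {n : ℕ} (v : Fin n → V) (ed : Fin n → Bool) : Prop :=
  ∃ w : (X : V) → D X,
    (∀ i, ed i = false → N.cit (v i) (v (finNext i)) w) ∨
    ((∀ i, ed i = false) ∧ ∀ i, N.cit (v (finNext i)) (v i) w)

/-
A cycle of the `w`-directed graph of `N*` can be shortened to a simple one. Since the directed edges of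
`N*` alone form no cycle, some edge of it is a ci-arc oriented by `w`; labelling every other edge as
directed makes it a semi-directed cycle which `w` orients into a directed cycle. Conversely, an
assignment orienting a semi-directed cycle into a directed one exhibits a cycle of that `w`-directed graph.
-/

section Walks

variable {α : Type*} {r : α → α → Prop}

theorem Relation.TransGen.exists_walk {a b : α} (h : Relation.TransGen r a b) :
    ∃ k, 0 < k ∧ ∃ f : ℕ → α, f 0 = a ∧ f k = b ∧ ∀ i < k, r (f i) (f (i + 1)) := by
  induction h with
  | single hab => exact ⟨1, one_pos, fun i => if i = 0 then a else _, rfl, rfl, by simpa⟩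
  | @tail b c _ hbc ih =>
    obtain ⟨k, hk, f, hf0, hfk, hf⟩ := ih
    refine ⟨k + 1, k.succ_pos, Function.update f (k + 1) c, ?_, by simp, fun i hi => ?_⟩
    · rw [Function.update_of_ne (by omega), hf0]
    · rw [Function.update_of_ne (by omega)]
      rcases Nat.lt_or_ge i k with hik | hik
      · rw [Function.update_of_ne (by omega)]
        exact hf i hik
      · obtain rfl : i = k := by omega
        rw [Function.update_self, hfk]
        exact hbc

theorem Relation.transGen_of_walk {k : ℕ} (hk : 0 < k) (f : ℕ → α)
    (hf : ∀ i < k, r (f i) (f (i + 1))) : Relation.TransGen r (f 0) (f k) := by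
  induction k with
  | zero => omega
  | succ k ih =>
    rcases Nat.eq_zero_or_pos k with rfl | hk
    · exact .single (hf 0 one_pos)
    · exact (ih hk fun i hi => hf i (by omega)).tail (hf k k.lt_succ_self)

theorem transGen_of_forall_finNext {n : ℕ} (hn : 0 < n) (v : Fin n → α)
    (hv : ∀ i, r (v i) (v (finNext i))) : Relation.TransGen r (v ⟨0, hn⟩) (v ⟨0, hn⟩) := by
  have hwalk := Relation.transGen_of_walk hn (fun k => v ⟨k % n, Nat.mod_lt _ hn⟩) fun i _ => by
    simpa [finNext, Nat.mod_add_mod] using hv ⟨i % n, Nat.mod_lt _ hn⟩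
  simpa using hwalk

/-- A closed walk of minimal positive length visits pairwise distinct vertices. -/
theorem exists_injective_cycle_of_transGen (hr : ∀ x, ¬ r x x) {a : α}
    (h : Relation.TransGen r a a) :
    ∃ n, 2 ≤ n ∧ ∃ v : Fin n → α, Function.Injective v ∧ ∀ i, r (v i) (v (finNext i)) := by
  classical
  have hex : ∃ k, 0 < k ∧ ∃ f : ℕ → α, f 0 = f k ∧ ∀ i < k, r (f i) (f (i + 1)) := by
    obtain ⟨k, hk, f, hf0, hfk, hf⟩ := h.exists_walk
    exact ⟨k, hk, f, hf0.trans hfk.symm, hf⟩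
  obtain ⟨hn, f, hf0, hf⟩ := Nat.find_spec hex
  set n := Nat.find hex
  have hdistinct : ∀ a b, a < b → b < n → f a ≠ f b := by
    intro a b hab hbn hfab
    refine Nat.find_min hex (show b - a < n by omega) ⟨by omega, fun t => f (a + t), ?_, ?_⟩
    · simp [hfab, Nat.add_sub_cancel' hab.le]
    · exact fun t ht => hf (a + t) (by omega)
  refine ⟨n, ?_, fun i => f i, ?_, fun i => ?_⟩
  · by_contra! hn2
    have hloop := hf 0 hn
    rw [show 0 + 1 = n by omega, ← hf0] at hloop
    exact hr _ hloop
  · intro i j hij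
    rcases lt_trichotomy i.val j.val with hlt | heq | hgt
    · exact absurd hij (hdistinct _ _ hlt j.isLt)
    · exact Fin.ext heq
    · exact absurd hij.symm (hdistinct _ _ hgt i.isLt)
  · have hnext : f ((i + 1) % n) = f (i + 1) := by
      rcases Nat.lt_or_ge (i + 1) n with hlt | hge
      · rw [Nat.mod_eq_of_lt hlt]
      · rw [show (i : ℕ) + 1 = n by omega, Nat.mod_self, hf0]
    simpa only [finNext, hnext] using hf i i.isLt

end Walks

namespace TCPNet

theorem not_wEdge_self (N : TCPNet V D) (w : (X : V) → D X) (X : V) : ¬ N.wEdge w X X := by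
  rintro ((hcp | hi | ⟨W, hci, hsel⟩) | hcit)
  · exact N.cp_ne _ _ hcp rfl
  · exact N.iarc_ne _ _ hi rfl
  · exact (N.sel_not_endpoint _ _ hci).1 hsel
  · exact N.ci_ne _ _ (N.cit_ci _ _ _ hcit) rfl

theorem CondAcyclic.not_condDirected {N : TCPNet V D} (hN : N.CondAcyclic) {n : ℕ}
    {v : Fin n → V} {ed : Fin n → Bool} (hv : IsSemiDirCycle N v ed) : ¬ CondDirected N v ed := by
  rintro ⟨w, hforward | ⟨-, hbackward⟩⟩
  · refine hN w _ (transGen_of_forall_finNext (two_pos.trans_le hv.1) v fun i => ?_)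
    cases hed : ed i
    · exact .inr (hforward i hed)
    · exact .inl (hv.2.2.1 i hed)
  · have hcycle : Relation.TransGen (flip (N.wEdge w)) (v ⟨0, _⟩) (v ⟨0, _⟩) :=
      transGen_of_forall_finNext (two_pos.trans_le hv.1) v fun i => .inr (hbackward i)
    exact hN w _ (Relation.transGen_swap.mp hcycle)

theorem condAcyclic_of_forall_not_condDirected (N : TCPNet V D)
    (hdir : ∀ X, ¬ Relation.TransGen N.dirEdge X X)
    (hcycles : ∀ (n : ℕ) (v : Fin n → V) (ed : Fin n → Bool),
      IsSemiDirCycle N v ed → ¬ CondDirected N v ed) :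
    N.CondAcyclic := by
  classical
  intro w X hX
  obtain ⟨n, hn, v, hinj, hv⟩ := exists_injective_cycle_of_transGen (N.not_wEdge_self w) hX
  let ed : Fin n → Bool := fun i => decide (N.dirEdge (v i) (v (finNext i)))
  have hcit : ∀ i, ed i = false → N.cit (v i) (v (finNext i)) w := fun i hi =>
    (hv i).resolve_left (by simpa [ed] using hi)
  have hsome : ∃ i, ed i = false := by
    by_contra! hall
    exact hdir _ (transGen_of_forall_finNext (by omega) v fun i => by simpa [ed] using hall i)
  exact hcycles n v ed ⟨hn, hinj, fun i hi => by simpa [ed] using hi,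
    fun i hi => N.cit_ci _ _ _ (hcit i hi), hsome⟩ ⟨w, .inl hcit⟩

end TCPNet

theorem stmt5_general
    (N : TCPNet V D)
    (hnodir : ∀ X, ¬ Relation.TransGen N.dirEdge X X) :
    N.CondAcyclic ↔
      ∀ (n : ℕ) (v : Fin n → V) (ed : Fin n → Bool),
        IsSemiDirCycle N v ed → ¬ CondDirected N v ed :=
  ⟨fun hN _ _ _ hv => hN.not_condDirected hv, N.condAcyclic_of_forall_not_condDirected hnodir⟩

/-- if the dependency graph of `N` has no directed cycle
consisting solely of its directed edges, then `N` is conditionally acyclic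
iff every semi-directed cycle of its dependency graph is conditionally
acyclic. -/
theorem stmt5 [Fintype V] [∀ X, Fintype (D X)] [∀ X, Nontrivial (D X)]
    (N : TCPNet V D)
    (hnodir : ∀ X, ¬ Relation.TransGen N.dirEdge X X) :
    N.CondAcyclic ↔
      ∀ (n : ℕ) (v : Fin n → V) (ed : Fin n → Bool),
        IsSemiDirCycle N v ed → ¬ CondDirected N v ed :=
  stmt5_general N hnodir
end

section
/- Let A be a semi-directed cycle in the dependency graph N* of a TCP-net N, and fix a direction d along A (equal to the direction of A if A contains directed edges). Assume that every ci-arc γ of A has at least one CIT entry orienting γ in direction d. If the selector sets of the ci-arcs of A are pairwise disjoint, then A is conditionally directed. Equivalently, under this assumption, if A is conditionally acyclic then A contains two distinct ci-arcs γi, γj with S(γi) ∩ S(γj) ≠ ∅. -/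
/-!
Fix for each ci-arc an assignment realising a CIT entry that orients it in the traversal
direction. As the selector sets are pairwise disjoint, a single assignment agrees with each of
these on the corresponding selector set, and since a CIT only reads its selector set, that
assignment orients every ci-arc forward.
-/

universe u v

variable {V : Type u} {D : V → Type v}

open Function in
theorem exists_pi_agreeing_of_pairwise_disjoint {ι : Type*} [∀ X, Nonempty (D X)]
    (S : ι → Set V) (f : ι → (X : V) → D X) (hS : Pairwise (Disjoint on S)) :
    ∃ w : (X : V) → D X, ∀ i, ∀ X ∈ S i, w X = f i X := by
  classical
  refine ⟨fun X => if h : ∃ i, X ∈ S i then f h.choose X else Classical.arbitrary _, ?_⟩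
  intro i X hX
  have h : ∃ j, X ∈ S j := ⟨i, hX⟩
  have hi : h.choose = i := by
    by_contra hne
    exact Set.disjoint_left.mp (hS hne) h.choose_spec hX
  simp only [dif_pos h, hi]

theorem stmt6_general [∀ X, Nontrivial (D X)]
    (N : TCPNet V D) {n : ℕ} (v : Fin n → V) (ed : Fin n → Bool)
    (hentry : ∀ i, ed i = false → ∃ w : (X : V) → D X, N.cit (v i) (v (finNext i)) w)
    (hdisj : ∀ i j, i ≠ j → ed i = false → ed j = false →
      N.sel (v i) (v (finNext i)) ∩ N.sel (v j) (v (finNext j)) = ∅) :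
    CondDirected N v ed := by
  choose wi hwi using hentry
  obtain ⟨w, hw⟩ := exists_pi_agreeing_of_pairwise_disjoint
    (fun i : {i // ed i = false} => N.sel (v i) (v (finNext i.1))) (fun i => wi i i.2)
    fun i j hij => Set.disjoint_iff_inter_eq_empty.mpr <|
      hdisj i j (Subtype.coe_injective.ne hij) i.2 j.2
  exact ⟨w, Or.inl fun i hi => (N.cit_local _ _ _ _ (hw ⟨i, hi⟩)).mpr (hwi i hi)⟩

/-- let `(v, ed)` be a semi-directed cycle, with direction `d`
the traversal direction (the direction of the cycle if it contains directed
edges).  If every ci-arc of the cycle has at least one CIT entry orienting it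
in direction `d` and the selector sets of the ci-arcs are pairwise disjoint,
then the cycle is conditionally directed. -/
theorem stmt6 [Fintype V] [∀ X, Fintype (D X)] [∀ X, Nontrivial (D X)]
    (N : TCPNet V D) {n : ℕ} (v : Fin n → V) (ed : Fin n → Bool)
    (hA : IsSemiDirCycle N v ed)
    (hentry : ∀ i, ed i = false → ∃ w : (X : V) → D X, N.cit (v i) (v (finNext i)) w)
    (hdisj : ∀ i j, i ≠ j → ed i = false → ed j = false →
      N.sel (v i) (v (finNext i)) ∩ N.sel (v j) (v (finNext j)) = ∅) :
    CondDirected N v ed :=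
  stmt6_general N v ed hentry hdisj
end

section
/- A semi-directed cycle A in the dependency graph N* of a TCP-net N is conditionally acyclic if it contains two ci-arcs γi, γj such that either: (a) A contains directed edges, and for every assignment u to S(γi) ∩ S(γj), either no CIT entry of γi consistent with u orients γi in the direction of A, or no CIT entry of γj consistent with u orients γj in the direction of A; or (b) all edges of A are undirected, and for every assignment u to S(γi) ∩ S(γj) there is a choice of the two opposite directions along A, one for γi and the other for γj, such that no CIT entry of γi consistent with u orients γi in its chosen direction and no CIT entry of γj consistent with u orients γj in its chosen direction. -/
universe u v

variable {V : Type u} {D : V → Type v}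

/-- Some CIT entry of the ci-arc `(X,Y)` that is consistent with the
assignment `u` on the variables `S` declares `X` more important than `Y`. -/
def Orients (N : TCPNet V D) (S : Set V) (u : (X : V) → D X) (X Y : V) : Prop :=
  ∃ w : (Z : V) → D Z, (∀ Z ∈ S, w Z = u Z) ∧ N.cit X Y w

theorem Orients.of_cit {N : TCPNet V D} (S : Set V) {w : (X : V) → D X} {X Y : V}
    (hw : N.cit X Y w) : Orients N S w X Y :=
  ⟨w, fun _ _ => rfl, hw⟩

theorem stmt7_general (N : TCPNet V D) {n : ℕ} (v : Fin n → V) (ed : Fin n → Bool)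
    (h : ∃ i j : Fin n, i ≠ j ∧ ed i = false ∧ ed j = false ∧
      (((∃ k, ed k = true) ∧
        ∀ u : (X : V) → D X,
          ¬ Orients N (N.sel (v i) (v (finNext i)) ∩ N.sel (v j) (v (finNext j)))
              u (v i) (v (finNext i)) ∨
          ¬ Orients N (N.sel (v i) (v (finNext i)) ∩ N.sel (v j) (v (finNext j)))
              u (v j) (v (finNext j))) ∨
       ((∀ k, ed k = false) ∧
        ∀ u : (X : V) → D X,
          (¬ Orients N (N.sel (v i) (v (finNext i)) ∩ N.sel (v j) (v (finNext j)))
              u (v i) (v (finNext i)) ∧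
           ¬ Orients N (N.sel (v i) (v (finNext i)) ∩ N.sel (v j) (v (finNext j)))
              u (v (finNext j)) (v j)) ∨
          (¬ Orients N (N.sel (v i) (v (finNext i)) ∩ N.sel (v j) (v (finNext j)))
              u (v (finNext i)) (v i) ∧
           ¬ Orients N (N.sel (v i) (v (finNext i)) ∩ N.sel (v j) (v (finNext j)))
              u (v j) (v (finNext j)))))) :
    ¬ CondDirected N v ed := by
  rintro ⟨w, hw⟩
  obtain ⟨i, j, -, hi, hj, hcase⟩ := h
  set S := N.sel (v i) (v (finNext i)) ∩ N.sel (v j) (v (finNext j))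
  -- Take `u := w`: the orienting assignment is itself consistent with `u`.
  rcases hw with hfwd | ⟨hall, hrev⟩
  · have oi := Orients.of_cit S (hfwd i hi)
    have oj := Orients.of_cit S (hfwd j hj)
    rcases hcase with ⟨-, hu⟩ | ⟨-, hu⟩
    · exact (hu w).elim (· oi) (· oj)
    · exact (hu w).elim (fun h => h.1 oi) (fun h => h.2 oj)
  · have oi := Orients.of_cit S (hrev i)
    have oj := Orients.of_cit S (hrev j)
    rcases hcase with ⟨⟨k, hk⟩, -⟩ | ⟨-, hu⟩
    · simp [hall k] at hk
    · exact (hu w).elim (fun h => h.2 oj) (fun h => h.1 oi)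

/-- a semi-directed cycle `(v, ed)` is conditionally acyclic if
it contains two ci-arcs `γi, γj` such that either (a) the cycle contains
directed edges and, for every assignment `u` to `S(γi) ∩ S(γj)`, one of
`γi, γj` has no CIT entry consistent with `u` orienting it in the direction
of the cycle, or (b) all edges are ci-arcs and, for every assignment `u` to
`S(γi) ∩ S(γj)`, there is a choice of opposite directions for `γi` and `γj`
such that neither has a CIT entry consistent with `u` orienting it in its
chosen direction. -/
theorem stmt7 [Fintype V] [∀ X, Fintype (D X)] [∀ X, Nontrivial (D X)]
    (N : TCPNet V D) {n : ℕ} (v : Fin n → V) (ed : Fin n → Bool)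
    (hA : IsSemiDirCycle N v ed)
    (h : ∃ i j : Fin n, i ≠ j ∧ ed i = false ∧ ed j = false ∧
      (((∃ k, ed k = true) ∧
        ∀ u : (X : V) → D X,
          ¬ Orients N (N.sel (v i) (v (finNext i)) ∩ N.sel (v j) (v (finNext j)))
              u (v i) (v (finNext i)) ∨
          ¬ Orients N (N.sel (v i) (v (finNext i)) ∩ N.sel (v j) (v (finNext j)))
              u (v j) (v (finNext j))) ∨
       ((∀ k, ed k = false) ∧
        ∀ u : (X : V) → D X,
          (¬ Orients N (N.sel (v i) (v (finNext i)) ∩ N.sel (v j) (v (finNext j)))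
              u (v i) (v (finNext i)) ∧
           ¬ Orients N (N.sel (v i) (v (finNext i)) ∩ N.sel (v j) (v (finNext j)))
              u (v (finNext j)) (v j)) ∨
          (¬ Orients N (N.sel (v i) (v (finNext i)) ∩ N.sel (v j) (v (finNext j)))
              u (v (finNext i)) (v i) ∧
           ¬ Orients N (N.sel (v i) (v (finNext i)) ∩ N.sel (v j) (v (finNext j)))
              u (v j) (v (finNext j)))))) :
    ¬ CondDirected N v ed :=
  stmt7_general N v ed h
end

section
/- Let A be a semi-directed cycle containing at least one directed edge, in the dependency graph N* of a TCP-net N. Then A is conditionally acyclic if and only if for every assignment u to shared(A) there exists a ci-arc γ_u of A such that no CIT entry of γ_u consistent with u orients γ_u in the direction of A. -/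
universe u v

variable {V : Type u} {D : V → Type v}

/-- `shared(A)`: the union of the pairwise intersections of the selector
sets of the ci-arcs of the semi-directed cycle `(v, ed)`. -/
def sharedSet (N : TCPNet V D) {n : ℕ} (v : Fin n → V) (ed : Fin n → Bool) : Set V :=
  {Z | ∃ i j, i ≠ j ∧ ed i = false ∧ ed j = false ∧
    Z ∈ N.sel (v i) (v (finNext i)) ∧ Z ∈ N.sel (v j) (v (finNext j))}

theorem exists_glue_of_pairwise_agree {ι α : Type*} {β : α → Type*} (S : ι → Set α)
    (f : ι → (a : α) → β a) (g : (a : α) → β a)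
    (hf : ∀ i j, i ≠ j → ∀ a ∈ S i, a ∈ S j → f i a = f j a) :
    ∃ F : (a : α) → β a, ∀ i, ∀ a ∈ S i, F a = f i a := by
  classical
  refine ⟨fun a => if h : ∃ i, a ∈ S i then f h.choose a else g a, fun i a ha => ?_⟩
  have h : ∃ i, a ∈ S i := ⟨i, ha⟩
  simp only [dif_pos h]
  by_cases hi : h.choose = i
  · rw [hi]
  · exact hf _ _ hi a h.choose_spec ha

theorem orients_of_cit (N : TCPNet V D) (S : Set V) {u : (X : V) → D X} {X Y : V}
    (h : N.cit X Y u) : Orients N S u X Y :=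
  ⟨u, fun _ _ => rfl, h⟩

theorem condDirected_iff_of_exists_dirEdge (N : TCPNet V D) {n : ℕ} {v : Fin n → V}
    {ed : Fin n → Bool} (hdir : ∃ k, ed k = true) :
    CondDirected N v ed ↔
      ∃ w : (X : V) → D X, ∀ i, ed i = false → N.cit (v i) (v (finNext i)) w := by
  obtain ⟨k, hk⟩ := hdir
  refine ⟨fun ⟨w, hw⟩ => ⟨w, hw.resolve_right fun hall => ?_⟩, fun ⟨w, hw⟩ => ⟨w, Or.inl hw⟩⟩
  simp [hall.1 k] at hk

/-- Only the values on `shared(A)` matter: CIT witnesses of distinct ci-arcs that agree with `u`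
there can be merged, since outside `shared(A)` their selector sets are disjoint. -/
theorem exists_forall_cit_iff_exists_forall_orients (N : TCPNet V D) {n : ℕ} (v : Fin n → V)
    (ed : Fin n → Bool) :
    (∃ w : (X : V) → D X, ∀ i, ed i = false → N.cit (v i) (v (finNext i)) w) ↔
      ∃ u : (X : V) → D X, ∀ i, ed i = false →
        Orients N (sharedSet N v ed) u (v i) (v (finNext i)) := by
  refine ⟨fun ⟨w, hw⟩ => ⟨w, fun i hi => orients_of_cit N _ (hw i hi)⟩, fun ⟨u, hu⟩ => ?_⟩
  choose W hWu hWcit using fun i : {i // ed i = false} => hu i.1 i.2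
  obtain ⟨w, hw⟩ := exists_glue_of_pairwise_agree (fun i => N.sel (v i.1) (v (finNext i.1))) W u
    fun i j hij Z hZi hZj => by
      have hZ : Z ∈ sharedSet N v ed := ⟨i.1, j.1, Subtype.coe_ne_coe.mpr hij, i.2, j.2, hZi, hZj⟩
      rw [hWu i Z hZ, hWu j Z hZ]
  exact ⟨w, fun i hi => (N.cit_local _ _ _ _ (hw ⟨i, hi⟩)).mpr (hWcit ⟨i, hi⟩)⟩

theorem stmt8_general
    (N : TCPNet V D) {n : ℕ} (v : Fin n → V) (ed : Fin n → Bool)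
    (hdir : ∃ k, ed k = true) :
    ¬ CondDirected N v ed ↔
      ∀ u : (X : V) → D X, ∃ i, ed i = false ∧
        ¬ Orients N (sharedSet N v ed) u (v i) (v (finNext i)) := by
  rw [condDirected_iff_of_exists_dirEdge N hdir, exists_forall_cit_iff_exists_forall_orients]
  push Not
  rfl

/-- a semi-directed cycle containing at least one directed edge
is conditionally acyclic iff for every assignment `u` to `shared(A)` some
ci-arc of the cycle has no CIT entry consistent with `u` orienting it in the
direction of the cycle. -/
theorem stmt8 [Fintype V] [∀ X, Fintype (D X)] [∀ X, Nontrivial (D X)]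
    (N : TCPNet V D) {n : ℕ} (v : Fin n → V) (ed : Fin n → Bool)
    (hA : IsSemiDirCycle N v ed)
    (hdir : ∃ k, ed k = true) :
    ¬ CondDirected N v ed ↔
      ∀ u : (X : V) → D X, ∃ i, ed i = false ∧
        ¬ Orients N (sharedSet N v ed) u (v i) (v (finNext i)) :=
  stmt8_general N v ed hdir
end

section
/- Let F be a 3-CNF formula with clauses C_1, …, C_n over propositional variables x_1, …, x_m, clause C_j containing literals L_{j,1}, L_{j,2}, L_{j,3}. Construct the TCP-net N with boolean variables X_1, …, X_m, C_1, …, C_n, and L_{j,k} (1 ≤ j ≤ n, 1 ≤ k ≤ 3); no cp-arcs; i-arcs (C_j, L_{j,k}) for all j, k; and ci-arcs (L_{j,k}, C_{(j mod n)+1}) for all j, k, where the selector set of the ci-arc (L_{j,k}, C_{(j mod n)+1}) is {X_i} for the propositional variable x_i occurring in literal L_{j,k}, and its CIT declares L_{j,k} more important than C_{(j mod n)+1} on the value of X_i making the literal L_{j,k} true, and less important on the value making L_{j,k} false. Then the dependency graph N* of N contains a conditionally directed semi-directed cycle if and only if F is satisfiable. -/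
/-!
Fix an assignment `w`. In the `w`-directed graph nothing points into an `X i`; an `L j k` can
only be left along its ci-arc to `C (j + 1)`, which `w` orients forward exactly when it makes
the literal true; and `C j` can only be left along an i-arc to some `L j k`, because the
reversed ci-arc into `L (j - 1) k` would make that literal false although the cycle must
leave `L (j - 1) k` forward. So a cycle oriented by `w` runs through every `C j` and, for each
clause, through a literal made true by `w`. Conversely, a satisfying assignment picks such
a literal `k j` in every clause and orients the cycle `C 0 → L 0 (k 0) → C 1 → ⋯ → C 0`.
-/

universe u v

variable {V : Type u} {D : V → Type v}

/-- The variables of the TCP-net built from a 3-CNF formula with `m`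
propositional variables and `n` clauses: `X i`, `C j`, and `L j k`. -/
abbrev SatV (m n : ℕ) : Type := Sum (Fin m) (Sum (Fin n) (Fin n × Fin 3))

abbrev SatV.X {m n : ℕ} (i : Fin m) : SatV m n := Sum.inl i
abbrev SatV.C {m n : ℕ} (j : Fin n) : SatV m n := Sum.inr (Sum.inl j)
abbrev SatV.L {m n : ℕ} (j : Fin n) (k : Fin 3) : SatV m n := Sum.inr (Sum.inr (j, k))

theorem Fin.eq_univ_of_add_one_mem {n : ℕ} [NeZero n] {s : Set (Fin n)} {j₀ : Fin n}
    (h₀ : j₀ ∈ s) (hs : ∀ j ∈ s, j + 1 ∈ s) : s = Set.univ := by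
  obtain ⟨n, rfl⟩ := Nat.exists_eq_succ_of_ne_zero (NeZero.ne n)
  have h : ∀ i, j₀ + i ∈ s := Fin.induction (by simpa using h₀) fun i hi => by
    rw [← Fin.coeSucc_eq_succ, ← add_assoc]; exact hs _ hi
  exact Set.eq_univ_of_forall fun j => by simpa using h (j - j₀)

theorem finNext_eq_add_one {n : ℕ} [NeZero n] (i : Fin n) : finNext i = i + 1 := by
  ext
  simp [finNext, Fin.val_add]

theorem finNext_surjective {n : ℕ} : Function.Surjective (finNext : Fin n → Fin n) := by
  intro j
  have : NeZero n := ⟨j.pos.ne'⟩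
  exact ⟨j - 1, by simp [finNext_eq_add_one]⟩

theorem finNext_finProdFinEquiv_zero {n : ℕ} (j : Fin n) :
    finNext (finProdFinEquiv (j, (0 : Fin 2))) = finProdFinEquiv (j, 1) := by
  ext
  simp only [finNext, finProdFinEquiv, Equiv.coe_fn_mk, Fin.coe_ofNat_eq_mod, Nat.zero_mod,
    zero_add, Nat.mod_succ]
  have := j.isLt
  rw [Nat.mod_eq_of_lt (by omega)]
  omega

theorem finNext_finProdFinEquiv_one {n : ℕ} [NeZero n] (j : Fin n) :
    finNext (finProdFinEquiv (j, (1 : Fin 2))) = finProdFinEquiv (j + 1, 0) := by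
  ext
  simp only [finNext, finProdFinEquiv, Equiv.coe_fn_mk, Fin.coe_ofNat_eq_mod, Nat.mod_succ,
    Nat.zero_mod, Fin.val_add, Nat.add_mod_mod, zero_add]
  rcases (show j.val + 1 ≤ n from j.isLt).lt_or_eq with h | h
  · rw [Nat.mod_eq_of_lt h, Nat.mod_eq_of_lt (by omega)]; omega
  · rw [h, Nat.mod_self, show 1 + 2 * j.val + 1 = n * 2 by omega, Nat.mod_self]

def TCPNet.SuccClosed (N : TCPNet V D) (w : (X : V) → D X) (S : Set V) : Prop :=
  ∀ x ∈ S, ∃ y ∈ S, N.wEdge w x y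

theorem TCPNet.succClosed_range_of_orientation {N : TCPNet V D} {nc : ℕ} {v : Fin nc → V}
    {ed : Fin nc → Bool} {w : (X : V) → D X}
    (hdir : ∀ i, ed i = true → N.dirEdge (v i) (v (finNext i)))
    (hw : (∀ i, ed i = false → N.cit (v i) (v (finNext i)) w) ∨
      ((∀ i, ed i = false) ∧ ∀ i, N.cit (v (finNext i)) (v i) w)) :
    N.SuccClosed w (Set.range v) := by
  rintro _ ⟨i, rfl⟩
  rcases hw with hfwd | ⟨-, hbwd⟩
  · cases h : ed i
    · exact ⟨_, ⟨finNext i, rfl⟩, Or.inr (hfwd i h)⟩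
    · exact ⟨_, ⟨finNext i, rfl⟩, Or.inl (hdir i h)⟩
  · obtain ⟨i', rfl⟩ := finNext_surjective i
    exact ⟨_, ⟨i', rfl⟩, Or.inr (hbwd i')⟩

open SatV

structure IsThreeSatNet {m n : ℕ} [NeZero n] (F : Fin n → Fin 3 → Fin m × Bool)
    (N : TCPNet (SatV m n) (fun _ => Bool)) : Prop where
  not_cp : ∀ x y, ¬ N.cp x y
  iarc_iff : ∀ x y, N.iarc x y ↔ ∃ j k, x = C j ∧ y = L j k
  ci_iff : ∀ x y, N.ci x y ↔
    (∃ j k, x = L j k ∧ y = C (j + 1)) ∨ (∃ j k, y = L j k ∧ x = C (j + 1))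
  sel_eq : ∀ j k, N.sel (L j k) (C (j + 1)) = {X (F j k).1}
  cit_L_C : ∀ j k w, N.cit (L j k) (C (j + 1)) w ↔ w (X (F j k).1) = (F j k).2
  cit_C_L : ∀ j k w, N.cit (C (j + 1)) (L j k) w ↔ w (X (F j k).1) = !(F j k).2

/-- Through `finProdFinEquiv`, this lists `C 0, L 0 (kf 0), C 1, L 1 (kf 1), …`. -/
def clauseCycle {m n : ℕ} (kf : Fin n → Fin 3) (p : Fin n × Fin 2) : SatV m n :=
  ![C p.1, L p.1 (kf p.1)] p.2

theorem clauseCycle_injective {m n : ℕ} (kf : Fin n → Fin 3) :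
    Function.Injective (clauseCycle (m := m) kf) := by
  rintro ⟨j, a⟩ ⟨j', b⟩ h
  fin_cases a <;> fin_cases b <;> simp_all [clauseCycle]

namespace IsThreeSatNet

variable {m n : ℕ} [NeZero n] {F : Fin n → Fin 3 → Fin m × Bool}
  {N : TCPNet (SatV m n) (fun _ => Bool)} {w : SatV m n → Bool}

theorem exists_eq_X_of_mem_sel (hN : IsThreeSatNet F N) {x y z : SatV m n} (hxy : N.ci x y)
    (hz : z ∈ N.sel x y) : ∃ i, z = X i := by
  rcases (hN.ci_iff x y).1 hxy with ⟨j, k, rfl, rfl⟩ | ⟨j, k, rfl, rfl⟩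
  · exact ⟨_, by simpa [hN.sel_eq] using hz⟩
  · rw [N.sel_symm, hN.sel_eq] at hz
    exact ⟨_, hz⟩

theorem not_wEdge_X (hN : IsThreeSatNet F N) (y : SatV m n) (i : Fin m) :
    ¬ N.wEdge w y (X i) := by
  rintro ((h | h | ⟨z, hz, -⟩) | h)
  · exact hN.not_cp _ _ h
  · simpa using (hN.iarc_iff _ _).1 h
  · simpa using (hN.ci_iff _ _).1 hz
  · simpa using (hN.ci_iff _ _).1 (N.cit_ci _ _ _ h)

theorem wEdge_L (hN : IsThreeSatNet F N) {j : Fin n} {k : Fin 3} {y : SatV m n}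
    (h : N.wEdge w (L j k) y) : y = C (j + 1) ∧ w (X (F j k).1) = (F j k).2 := by
  rcases h with (h | h | ⟨z, hz, hmem⟩) | h
  · exact absurd h (hN.not_cp _ _)
  · simpa using (hN.iarc_iff _ _).1 h
  · simpa using hN.exists_eq_X_of_mem_sel hz hmem
  · rcases (hN.ci_iff _ _).1 (N.cit_ci _ _ _ h) with ⟨j', k', he, rfl⟩ | ⟨_, _, -, he⟩
    · obtain ⟨rfl, rfl⟩ : j = j' ∧ k = k' := by simpa using he
      exact ⟨rfl, (hN.cit_L_C j k w).1 h⟩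
    · simp at he

theorem wEdge_C (hN : IsThreeSatNet F N) {j : Fin n} {y : SatV m n}
    (h : N.wEdge w (C j) y) : (∃ k, y = L j k) ∨
      ∃ j' k, j = j' + 1 ∧ y = L j' k ∧ w (X (F j' k).1) = !(F j' k).2 := by
  rcases h with (h | h | ⟨z, hz, hmem⟩) | h
  · exact absurd h (hN.not_cp _ _)
  · obtain ⟨j', k, he, rfl⟩ := (hN.iarc_iff _ _).1 h
    obtain rfl : j = j' := by simpa using he
    exact Or.inl ⟨k, rfl⟩
  · simpa using hN.exists_eq_X_of_mem_sel hz hmem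
  · rcases (hN.ci_iff _ _).1 (N.cit_ci _ _ _ h) with ⟨_, _, he, -⟩ | ⟨j', k, rfl, he⟩
    · simp at he
    · obtain rfl : j = j' + 1 := by simpa using he
      exact Or.inr ⟨j', k, rfl, rfl, (hN.cit_C_L j' k w).1 h⟩

theorem exists_L_mem_of_C_mem (hN : IsThreeSatNet F N) {S : Set (SatV m n)}
    (hS : N.SuccClosed w S) {j : Fin n} (hj : C j ∈ S) :
    ∃ k, L j k ∈ S := by
  obtain ⟨y, hy, hjy⟩ := hS _ hj
  rcases hN.wEdge_C hjy with ⟨k, rfl⟩ | ⟨j', k, -, rfl, hfalse⟩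
  · exact ⟨k, hy⟩
  · obtain ⟨z, -, hyz⟩ := hS _ hy
    simp [(hN.wEdge_L hyz).2] at hfalse

theorem clause_of_C_mem (hN : IsThreeSatNet F N) {S : Set (SatV m n)}
    (hS : N.SuccClosed w S) {j : Fin n} (hj : C j ∈ S) :
    (∃ k, w (X (F j k).1) = (F j k).2) ∧ C (j + 1) ∈ S := by
  obtain ⟨k, hk⟩ := hN.exists_L_mem_of_C_mem hS hj
  obtain ⟨y, hy, hky⟩ := hS _ hk
  obtain ⟨rfl, hlit⟩ := hN.wEdge_L hky
  exact ⟨⟨k, hlit⟩, hy⟩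

theorem exists_C_mem (hN : IsThreeSatNet F N) {S : Set (SatV m n)}
    (hS : N.SuccClosed w S) (hne : S.Nonempty) : ∃ j, C j ∈ S := by
  have of_L : ∀ j k, L j k ∈ S → ∃ j, C j ∈ S := fun j k hk => by
    obtain ⟨y, hy, hky⟩ := hS _ hk
    exact ⟨j + 1, (hN.wEdge_L hky).1 ▸ hy⟩
  obtain ⟨x, hx⟩ := hne
  rcases x with i | j | ⟨j, k⟩
  · obtain ⟨y, hy, hxy⟩ := hS _ hx
    rcases y with i' | j | ⟨j, k⟩
    · exact absurd hxy (hN.not_wEdge_X _ i')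
    · exact ⟨j, hy⟩
    · exact of_L j k hy
  · exact ⟨j, hx⟩
  · exact of_L j k hx

theorem satisfiable_of_succClosed (hN : IsThreeSatNet F N) {S : Set (SatV m n)}
    (hS : N.SuccClosed w S) (hne : S.Nonempty) :
    ∃ τ : Fin m → Bool, ∀ j, ∃ k, τ (F j k).1 = (F j k).2 := by
  obtain ⟨j₀, hj₀⟩ := hN.exists_C_mem hS hne
  have hall : {j | C j ∈ S} = Set.univ :=
    Fin.eq_univ_of_add_one_mem hj₀ fun j hj => (hN.clause_of_C_mem hS hj).2
  exact ⟨fun i => w (X i), fun j => (hN.clause_of_C_mem hS (hall ▸ Set.mem_univ j :)).1⟩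

theorem exists_condDirected_of_satisfiable (hN : IsThreeSatNet F N) {τ : Fin m → Bool}
    (hτ : ∀ j, ∃ k, τ (F j k).1 = (F j k).2) :
    ∃ (nc : ℕ) (v : Fin nc → SatV m n) (ed : Fin nc → Bool),
      IsSemiDirCycle N v ed ∧ CondDirected N v ed := by
  choose kf hkf using hτ
  have hn : 0 < n := Nat.pos_of_neZero n
  refine ⟨n * 2, clauseCycle kf ∘ finProdFinEquiv.symm,
    (fun p => ![true, false] p.2) ∘ finProdFinEquiv.symm,
    ⟨by omega, (clauseCycle_injective kf).comp finProdFinEquiv.symm.injective, ?_, ?_, ?_⟩,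
    Sum.elim τ fun _ => true, Or.inl ?_⟩
  all_goals simp only [finProdFinEquiv.surjective.forall, finProdFinEquiv.surjective.exists,
    Prod.forall, Fin.forall_fin_two, Prod.exists, Fin.exists_fin_two, finNext_finProdFinEquiv_zero,
    finNext_finProdFinEquiv_one, Function.comp_apply, Equiv.symm_apply_apply, clauseCycle,
    Matrix.cons_val_zero, Matrix.cons_val_one, Matrix.cons_val_fin_one, Bool.true_eq_false,
    Bool.false_eq_true, IsEmpty.forall_iff, forall_const, true_and, and_true, or_true, exists_const]
  · exact fun j => Or.inr (Or.inl ((hN.iarc_iff _ _).2 ⟨j, _, rfl, rfl⟩))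
  · exact fun j => (hN.ci_iff _ _).2 (Or.inl ⟨j, _, rfl, rfl⟩)
  · exact fun j => (hN.cit_L_C j _ _).2 (hkf j)

end IsThreeSatNet

/-- for a 3-CNF formula `F` (clause `j` has literals
`F j k = (i, b)`, meaning variable `x i` with polarity `b`), the TCP-net with
boolean variables `X i`, `C j`, `L j k`, no cp-arcs, i-arcs `(C j, L j k)`,
and ci-arcs `(L j k, C (j+1))` with selector `{X i}` whose CIT declares
`L j k` more important than `C (j+1)` exactly on the value of `X i` making
the literal true (and less important on the other value), has a conditionally
directed semi-directed cycle in its dependency graph iff `F` is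
satisfiable. -/
theorem stmt10 (n m : ℕ) [NeZero n] (F : Fin n → Fin 3 → Fin m × Bool)
    (N : TCPNet (SatV m n) (fun _ => Bool))
    (hcp : ∀ x y, ¬ N.cp x y)
    (hi : ∀ x y, N.iarc x y ↔ ∃ j k, x = SatV.C j ∧ y = SatV.L j k)
    (hci : ∀ x y, N.ci x y ↔
      (∃ j k, x = SatV.L j k ∧ y = SatV.C (j + 1)) ∨
      (∃ j k, y = SatV.L j k ∧ x = SatV.C (j + 1)))
    (hsel : ∀ j k, N.sel (SatV.L j k) (SatV.C (j + 1)) = {SatV.X (F j k).1})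
    (hcit1 : ∀ j k w, N.cit (SatV.L j k) (SatV.C (j + 1)) w ↔
      w (SatV.X (F j k).1) = (F j k).2)
    (hcit2 : ∀ j k w, N.cit (SatV.C (j + 1)) (SatV.L j k) w ↔
      w (SatV.X (F j k).1) = !(F j k).2) :
    (∃ (nc : ℕ) (v : Fin nc → SatV m n) (ed : Fin nc → Bool),
        IsSemiDirCycle N v ed ∧ CondDirected N v ed) ↔
      ∃ τ : Fin m → Bool, ∀ j : Fin n, ∃ k, τ (F j k).1 = (F j k).2 := by
  have hN : IsThreeSatNet F N := ⟨hcp, hi, hci, hsel, hcit1, hcit2⟩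
  refine ⟨?_, fun ⟨τ, hτ⟩ => hN.exists_condDirected_of_satisfiable hτ⟩
  rintro ⟨nc, v, ed, ⟨hnc, -, hdir, -, -⟩, w, hw⟩
  exact hN.satisfiable_of_succClosed (TCPNet.succClosed_range_of_orientation hdir hw)
    (Set.range_nonempty_iff_nonempty.2 ⟨⟨0, by omega⟩⟩)
end

section
/- Let F be a 3-CNF formula with clauses C_1, …, C_n over propositional variables x_1, …, x_m. Construct the TCP-net N with boolean variables X_1, …, X_m, C_1, …, C_n, and one dummy variable C; no cp-arcs; one i-arc (C, C_1); and ci-arcs E_j = (C_j, C_{j+1}) for 1 ≤ j ≤ n−1 and E_n = (C_n, C), where the selector set of E_j is the set of variables X_i whose propositional variable occurs in clause C_j, and CIT(E_j) declares C_j more important than the other endpoint of E_j exactly on those selector assignments that make clause C_j true, and less important on those that make C_j false. Then the semi-directed cycle consisting of the i-arc (C, C_1) and the ci-arcs E_1, …, E_n (the unique semi-directed cycle in the dependency graph N*) is conditionally directed if and only if F is satisfiable. -/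
universe u v

variable {V : Type u} {D : V → Type v}

/-- The variables of the TCP-net built from a 3-CNF formula with `m`
propositional variables and `n` clauses: `X i`, `C j`, and a dummy `C`. -/
abbrev Var11 (m n : ℕ) : Type := Sum (Fin m) (Sum (Fin n) Unit)

abbrev Var11.X {m n : ℕ} (i : Fin m) : Var11 m n := Sum.inl i
abbrev Var11.C {m n : ℕ} (j : Fin n) : Var11 m n := Sum.inr (Sum.inl j)
abbrev Var11.dummy {m n : ℕ} : Var11 m n := Sum.inr (Sum.inr ())

/-- The other endpoint of the ci-arc `E j`: the clause variable `C (j+1)`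
for `j < n - 1`, and the dummy variable `C` for `j = n - 1`. -/
def Var11.next {m n : ℕ} (j : Fin n) : Var11 m n :=
  if h : j.val + 1 < n then Var11.C ⟨j.val + 1, h⟩ else Var11.dummy

/-- The vertex sequence of the semi-directed cycle `C, C 0, C 1, …, C (n-1)`. -/
def cyc11V (m n : ℕ) : Fin (n + 1) → Var11 m n :=
  fun i => if h : 0 < i.val then Var11.C ⟨i.val - 1, by omega⟩ else Var11.dummy

/-- The edge labels of that cycle: only the edge from the dummy `C` to `C 0`
(the i-arc) is directed. -/
def cyc11Ed (n : ℕ) : Fin (n + 1) → Bool := fun i => decide (i.val = 0)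

/-!
The cycle `C, C 0, …, C (n-1)` contains the i-arc `(C, C 0)`, so it can only become a directed
cycle in its traversal direction. That happens for an assignment `w` exactly when every CIT
entry declares `C j` more important than its successor, i.e. when the restriction of `w` to
the variables `X i` satisfies every clause.
-/

theorem condDirected_iff_of_exists_directed (N : TCPNet V D)
    {n : ℕ} (v : Fin n → V) (ed : Fin n → Bool) (hed : ∃ i, ed i = true) :
    CondDirected N v ed ↔ ∃ w, ∀ i, ed i = false → N.cit (v i) (v (finNext i)) w := by
  obtain ⟨i, hi⟩ := hed
  refine exists_congr fun w => or_iff_left ?_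
  rintro ⟨hall, -⟩
  simp [hall i] at hi

section Cycle11

variable {m n : ℕ}

theorem cyc11V_eq_cons : cyc11V m n = Fin.cons Var11.dummy Var11.C := by
  ext i
  cases i using Fin.cases <;> simp [cyc11V]

@[simp]
theorem cyc11V_zero : cyc11V m n 0 = Var11.dummy := by
  simp [cyc11V_eq_cons]

@[simp]
theorem cyc11V_succ (j : Fin n) : cyc11V m n j.succ = Var11.C j := by
  simp [cyc11V_eq_cons]

theorem cyc11V_injective : Function.Injective (cyc11V m n) := by
  rw [cyc11V_eq_cons, Fin.cons_injective_iff]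
  exact ⟨by simp, Sum.inr_injective.comp Sum.inl_injective⟩

theorem cyc11V_finNext_zero [NeZero n] : cyc11V m n (finNext 0) = Var11.C 0 := by
  have : (finNext (0 : Fin (n + 1))) = (0 : Fin n).succ := by
    ext
    simp [finNext, Nat.mod_eq_of_lt (Nat.succ_lt_succ (NeZero.pos n))]
  rw [this, cyc11V_succ]

theorem cyc11V_finNext_succ (j : Fin n) : cyc11V m n (finNext j.succ) = Var11.next j := by
  unfold Var11.next
  split_ifs with h
  · have : finNext j.succ = (⟨j + 1, h⟩ : Fin n).succ := by
      ext
      simp [finNext, Nat.mod_eq_of_lt (Nat.succ_lt_succ h)]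
    rw [this, cyc11V_succ]
  · have : finNext j.succ = 0 := by
      ext
      simp [finNext, show (j : ℕ) + 1 = n by omega]
    rw [this, cyc11V_zero]

@[simp]
theorem cyc11Ed_zero : cyc11Ed n 0 = true := by
  simp [cyc11Ed]

@[simp]
theorem cyc11Ed_succ (j : Fin n) : cyc11Ed n j.succ = false := by
  simp [cyc11Ed]

theorem isSemiDirCycle_cyc11 [NeZero n] (N : TCPNet (Var11 m n) (fun _ => Bool))
    (hi : ∀ x y, N.iarc x y ↔ x = Var11.dummy ∧ y = Var11.C (0 : Fin n))
    (hci : ∀ x y, N.ci x y ↔ ∃ j : Fin n,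
      (x = Var11.C j ∧ y = Var11.next j) ∨ (y = Var11.C j ∧ x = Var11.next j)) :
    IsSemiDirCycle N (cyc11V m n) (cyc11Ed n) := by
  refine ⟨by have := NeZero.pos n; omega, cyc11V_injective, ?_, ?_, ⟨_, cyc11Ed_succ (0 : Fin n)⟩⟩
  · intro i hed
    cases i using Fin.cases with
    | zero =>
      rw [cyc11V_zero, cyc11V_finNext_zero]
      exact Or.inr (Or.inl ((hi _ _).mpr ⟨rfl, rfl⟩))
    | succ j => simp at hed
  · intro i hed
    cases i using Fin.cases with
    | zero => simp at hed
    | succ j =>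
      rw [cyc11V_succ, cyc11V_finNext_succ]
      exact (hci _ _).mpr ⟨j, Or.inl ⟨rfl, rfl⟩⟩

theorem condDirected_cyc11_iff (F : Fin n → Fin 3 → Fin m × Bool)
    (N : TCPNet (Var11 m n) (fun _ => Bool))
    (hcit : ∀ (j : Fin n) w, N.cit (Var11.C j) (Var11.next j) w ↔
      ∃ k, w (Var11.X (F j k).1) = (F j k).2) :
    CondDirected N (cyc11V m n) (cyc11Ed n) ↔
      ∃ τ : Fin m → Bool, ∀ j : Fin n, ∃ k, τ (F j k).1 = (F j k).2 := by
  rw [condDirected_iff_of_exists_directed _ _ _ ⟨0, cyc11Ed_zero⟩]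
  simp only [Fin.forall_fin_succ, cyc11Ed_zero, cyc11Ed_succ, cyc11V_succ, cyc11V_finNext_succ,
    hcit, Bool.true_eq_false, false_imp_iff, true_imp_iff, true_and]
  constructor
  · rintro ⟨w, hw⟩
    exact ⟨fun i => w (Var11.X i), hw⟩
  · rintro ⟨τ, hτ⟩
    exact ⟨Sum.elim τ fun _ => false, hτ⟩

end Cycle11

theorem stmt11_general (n m : ℕ) [NeZero n] (F : Fin n → Fin 3 → Fin m × Bool)
    (N : TCPNet (Var11 m n) (fun _ => Bool))
    (hi : ∀ x y, N.iarc x y ↔ x = Var11.dummy ∧ y = Var11.C (0 : Fin n))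
    (hci : ∀ x y, N.ci x y ↔ ∃ j : Fin n,
      (x = Var11.C j ∧ y = Var11.next j) ∨ (y = Var11.C j ∧ x = Var11.next j))
    (hcit1 : ∀ (j : Fin n) w, N.cit (Var11.C j) (Var11.next j) w ↔
      ∃ k, w (Var11.X (F j k).1) = (F j k).2) :
    IsSemiDirCycle N (cyc11V m n) (cyc11Ed n) ∧
      (CondDirected N (cyc11V m n) (cyc11Ed n) ↔
        ∃ τ : Fin m → Bool, ∀ j : Fin n, ∃ k, τ (F j k).1 = (F j k).2) :=
  ⟨isSemiDirCycle_cyc11 N hi hci, condDirected_cyc11_iff F N hcit1⟩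

/-- for a 3-CNF formula `F`, the TCP-net with boolean variables
`X i`, `C j` and a dummy `C`, no cp-arcs, the single i-arc `(C, C 0)`, and
ci-arcs `E j` between `C j` and its successor (`C (j+1)`, resp. the dummy `C`
for the last clause) whose selector set consists of the variables of clause
`j` and whose CIT declares `C j` more important exactly on the selector
assignments making clause `j` true, has the property that the semi-directed
cycle consisting of the i-arc and `E 0, …, E (n-1)` is conditionally directed
iff `F` is satisfiable. -/
theorem stmt11 (n m : ℕ) [NeZero n] (F : Fin n → Fin 3 → Fin m × Bool)
    (N : TCPNet (Var11 m n) (fun _ => Bool))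
    (hcp : ∀ x y, ¬ N.cp x y)
    (hi : ∀ x y, N.iarc x y ↔ x = Var11.dummy ∧ y = Var11.C (0 : Fin n))
    (hci : ∀ x y, N.ci x y ↔ ∃ j : Fin n,
      (x = Var11.C j ∧ y = Var11.next j) ∨ (y = Var11.C j ∧ x = Var11.next j))
    (hsel : ∀ j : Fin n, N.sel (Var11.C j) (Var11.next j) =
      {z | ∃ k, z = Var11.X (F j k).1})
    (hcit1 : ∀ (j : Fin n) w, N.cit (Var11.C j) (Var11.next j) w ↔
      ∃ k, w (Var11.X (F j k).1) = (F j k).2)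
    (hcit2 : ∀ (j : Fin n) w, N.cit (Var11.next j) (Var11.C j) w ↔
      ¬ ∃ k, w (Var11.X (F j k).1) = (F j k).2) :
    IsSemiDirCycle N (cyc11V m n) (cyc11Ed n) ∧
      (CondDirected N (cyc11V m n) (cyc11Ed n) ↔
        ∃ τ : Fin m → Bool, ∀ j : Fin n, ∃ k, τ (F j k).1 = (F j k).2) :=
  stmt11_general n m F N hi hci hcit1
end

section
/- Let N be a conditionally acyclic TCP-net in which every CPT order ≻^X_p is a strict total order on D(X), and let x be an assignment to a (possibly empty) subset X' ⊆ V. Let o* be the completion of x obtained by the forward sweep procedure: process the variables in a topological order of the cp-arcs (which exists, since conditional acyclicity implies the cp-arc graph is acyclic) and assign each variable X ∉ X' the ≻^X_p-greatest value of D(X), where p is the already-determined assignment to Pa(X). Then o* is the most preferred outcome in Comp(x): for every completion o of x with o ≠ o*, N ⊨ o* ≻ o. -/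
universe u v

variable {V : Type u} {D : V → Type v}

/-!
Starting from any other completion `o` of `x`, pick a variable `X` on which `o` and `o*` differ
and whose cp-parents all agree with `o*` (one exists because the cp-graph is acyclic). Since the
parents of `X` are as in `o*`, the CPT of `X` prefers `o* X` to `o X` in the context of `o`, so
resetting `X` to `o* X` yields a preferred outcome that is strictly closer to `o*` in Hamming
distance. Iterating, we reach `o*` by a finite chain of CPT improvements, and transitivity of the
preference order gives `o* ≻ o`.
-/

open Function Relation

theorem hammingDist_update_lt {ι : Type*} {β : ι → Type*} [Fintype ι] [DecidableEq ι]
    [∀ i, DecidableEq (β i)] {x y : ∀ i, β i} {i : ι} (hi : x i ≠ y i) :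
    hammingDist (update x i (y i)) y < hammingDist x y := by
  refine Finset.card_lt_card ⟨fun j hj => ?_, fun hsub => ?_⟩
  · simp only [Finset.mem_filter, Finset.mem_univ, true_and] at hj ⊢
    rcases eq_or_ne j i with rfl | hji
    · simp at hj
    · rwa [update_of_ne hji] at hj
  · simpa using hsub (Finset.mem_filter.mpr ⟨Finset.mem_univ i, hi⟩)

namespace TCPNet

variable {N : TCPNet V D}

theorem CondAcyclic.wellFounded_cp [Finite V] (hN : N.CondAcyclic) (w : (X : V) → D X) :
    WellFounded N.cp := by
  have : IsStrictOrder V (TransGen N.cp) :=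
    { irrefl := fun X h => hN w X (TransGen.mono (fun _ _ h => Or.inl (Or.inl h)) X X h)
      trans := fun _ _ _ => TransGen.trans }
  exact Subrelation.wf TransGen.single (Finite.wellFounded_of_trans_of_irrefl _)

theorem exists_cp_minimal_ne (hwf : WellFounded N.cp) {o o' : (X : V) → D X} (hne : o ≠ o') :
    ∃ X, o X ≠ o' X ∧ ∀ Y, N.cp Y X → o Y = o' Y := by
  obtain ⟨X, hX, hmin⟩ := hwf.has_min {X | o X ≠ o' X} (ne_iff.mp hne)
  exact ⟨X, hX, fun Y hYX => not_not.mp fun hY => hmin Y hY hYX⟩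

theorem Satisfies.pref_update_of_cpt {pref : ((X : V) → D X) → ((X : V) → D X) → Prop}
    [DecidableEq V] (hsat : N.Satisfies pref) {o : (X : V) → D X} {X : V} {a : D X}
    (h : N.cpt X o a (o X)) : pref (update o X a) o := by
  refine hsat.1 X _ o (fun Y hY => update_of_ne hY _ _) ?_
  rw [update_self]
  exact (N.cpt_local X _ o (fun Y hY => update_of_ne (N.cp_ne Y X hY) _ _) _ _).mpr h

open scoped Classical in
theorem Satisfies.pref_of_cpt_optimal [Fintype V]
    {pref : ((X : V) → D X) → ((X : V) → D X) → Prop} (hpref : IsPrefOrder pref)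
    (hsat : N.Satisfies pref) (hwf : WellFounded N.cp) {X' : Set V} {ostar : (X : V) → D X}
    (hmax : ∀ X ∉ X', ∀ y : D X, y ≠ ostar X → N.cpt X ostar (ostar X) y)
    (o : (X : V) → D X) (ho : ∀ X ∈ X', o X = ostar X) (hne : o ≠ ostar) : pref ostar o := by
  obtain ⟨X, hX, hpa⟩ := exists_cp_minimal_ne hwf hne
  have hX' : X ∉ X' := fun hmem => hX (ho X hmem)
  have hcpt : N.cpt X o (ostar X) (o X) :=
    (N.cpt_local X ostar o (fun Y hY => (hpa Y hY).symm) _ _).mp (hmax X hX' _ hX)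
  have hstep : pref (update o X (ostar X)) o := hsat.pref_update_of_cpt hcpt
  by_cases hdone : update o X (ostar X) = ostar
  · rwa [hdone] at hstep
  have ho' : ∀ Y ∈ X', update o X (ostar X) Y = ostar Y := fun Y hY => by
    rcases eq_or_ne Y X with rfl | hYX
    · exact update_self ..
    · rw [update_of_ne hYX, ho Y hY]
  exact hpref.2 _ _ _ (pref_of_cpt_optimal hpref hsat hwf hmax _ ho' hdone) hstep
termination_by hammingDist o ostar
decreasing_by exact hammingDist_update_lt hX

end TCPNet

theorem stmt13_general [Fintype V]
    (N : TCPNet V D) (hN : N.CondAcyclic)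
    (X' : Set V) (x : (X : V) → D X)
    (ostar : (X : V) → D X)
    (hext : ∀ X ∈ X', ostar X = x X)
    (hmax : ∀ X ∉ X', ∀ y : D X, y ≠ ostar X → N.cpt X ostar (ostar X) y) :
    ∀ o : (X : V) → D X, (∀ X ∈ X', o X = x X) → o ≠ ostar →
      N.Entails ostar o := by
  intro o ho hne pref hpref hsat
  exact hsat.pref_of_cpt_optimal hpref (hN.wellFounded_cp ostar) hmax o
    (fun X hX => (ho X hX).trans (hext X hX).symm) hne

/-- forward sweep optimality.  Let `N` be conditionally acyclic
with all CPT orders strict total orders, let `x` be an assignment to a subset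
`X'` of the variables, and let `o*` be the outcome produced by the forward
sweep procedure, i.e., the completion of `x` in which every variable outside
`X'` takes the value that is most preferred given the values of its parents.
Then `o*` is the most preferred completion of `x`: `N ⊨ o* ≻ o` for every
other completion `o` of `x`. -/
theorem stmt13 [Fintype V] [∀ X, Fintype (D X)] [∀ X, Nontrivial (D X)]
    (N : TCPNet V D) (hN : N.CondAcyclic)
    (htotal : ∀ (X : V) (o : (Y : V) → D Y) (a b : D X), a ≠ b →
      N.cpt X o a b ∨ N.cpt X o b a)
    (X' : Set V) (x : (X : V) → D X)
    (ostar : (X : V) → D X)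
    (hext : ∀ X ∈ X', ostar X = x X)
    (hmax : ∀ X ∉ X', ∀ y : D X, y ≠ ostar X → N.cpt X ostar (ostar X) y) :
    ∀ o : (X : V) → D X, (∀ X ∈ X', o X = x X) → o ≠ ostar →
      N.Entails ostar o :=
  stmt13_general N hN X' x ostar hext hmax
end

section
/- Let N be a satisfiable TCP-net in which every CPT order ≻^X_p is a strict total order on D(X), and let o and o' be outcomes. Then N ⊨ o ≻ o' if and only if there is an improving flipping sequence with respect to N from o' to o. -/
universe u v

variable {V : Type u} {D : V → Type v}

/-- A single improving flip from `o` to `o'` sanctioned by `N`: either a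
CP-flip (exactly one variable improves, given its parents' common values) or
an I-flip (one variable improves, another worsens, and the former is more
important than the latter via an i-arc or a ci-arc whose CIT declares it so
on the common values of the selector set). -/
def ImpFlip (N : TCPNet V D) (o o' : (X : V) → D X) : Prop :=
  (∃ X, (∀ Y, Y ≠ X → o Y = o' Y) ∧ o X ≠ o' X ∧ N.cpt X o (o' X) (o X)) ∨
  (∃ X Y, X ≠ Y ∧ o X ≠ o' X ∧ o Y ≠ o' Y ∧ (∀ Z, Z ≠ X → Z ≠ Y → o Z = o' Z) ∧
    N.cpt X o (o' X) (o X) ∧ N.cpt Y o (o Y) (o' Y) ∧ (N.iarc X Y ∨ N.cit X Y o))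


/-!
A satisfying preference order contains every improving flip, reversed, and hence the transitive
closure of the flips. Conversely, when all CPTs are total, that transitive closure itself
satisfies `N`: a change improving `X` and altering a less important `Y` is either an I-flip or,
when `Y` improves as well, two consecutive CP-flips. It is irreflexive because it is contained in
some satisfying order, so it is the least satisfying preference order.
-/

open Relation

namespace TCPNet

variable {N : TCPNet V D}

def MoreImportant (N : TCPNet V D) (X Y : V) (o : (Z : V) → D Z) : Prop :=
  N.iarc X Y ∨ N.cit X Y o

theorem cpt_congr_of_not_cp {X Y : V} {o o' : (Z : V) → D Z} (hYX : ¬ N.cp Y X)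
    (hoff : ∀ Z, Z ≠ X → Z ≠ Y → o Z = o' Z) (a b : D X) :
    N.cpt X o a b ↔ N.cpt X o' a b :=
  N.cpt_local X o o' (fun Z hZ => hoff Z (N.cp_ne Z X hZ) fun h => hYX (h ▸ hZ)) a b

theorem cpt_congr {X : V} {o o' : (Z : V) → D Z}
    (hoff : ∀ Z, Z ≠ X → o Z = o' Z) (a b : D X) :
    N.cpt X o a b ↔ N.cpt X o' a b :=
  cpt_congr_of_not_cp (fun h => N.cp_ne X X h rfl) (fun Z hZ _ => hoff Z hZ) a b

theorem ne_of_cpt {X : V} {o : (Z : V) → D Z} {a b : D X} (h : N.cpt X o a b) : a ≠ b := by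
  rintro rfl
  exact N.cpt_irrefl X o a h

namespace MoreImportant

variable {X Y : V} {o o' : (Z : V) → D Z}

theorem ne (h : N.MoreImportant X Y o) : X ≠ Y :=
  h.elim (N.iarc_ne X Y) fun hc => N.ci_ne X Y (N.cit_ci X Y o hc)

theorem not_cp (h : N.MoreImportant X Y o) : ¬ N.cp Y X :=
  h.elim (fun hi => (N.iarc_indep X Y hi).2) fun hc => (N.ci_indep X Y (N.cit_ci X Y o hc)).2

theorem congr (h : N.MoreImportant X Y o) (hoff : ∀ Z, Z ≠ X → Z ≠ Y → o Z = o' Z) :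
    N.MoreImportant X Y o' := by
  refine h.imp id fun hc => ?_
  have hsel := N.sel_not_endpoint X Y (N.cit_ci X Y o hc)
  exact (N.cit_local X Y o o' fun Z hZ =>
    hoff Z (fun h => hsel.1 (h ▸ hZ)) fun h => hsel.2 (h ▸ hZ)).mp hc

end MoreImportant

variable {pref : ((X : V) → D X) → ((X : V) → D X) → Prop}

theorem Satisfies.of_moreImportant (hs : N.Satisfies pref) {X Y : V} {o o' : (Z : V) → D Z}
    (himp : N.MoreImportant X Y o) (hoff : ∀ Z, Z ≠ X → Z ≠ Y → o Z = o' Z)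
    (hX : N.cpt X o (o X) (o' X)) : pref o o' :=
  himp.elim (fun hi => hs.2.1 X Y o o' hi hoff hX) fun hc => hs.2.2 X Y o o' hc hoff hX

theorem Satisfies.of_impFlip (hs : N.Satisfies pref) {o o' : (X : V) → D X}
    (h : ImpFlip N o o') : pref o' o := by
  rcases h with ⟨X, hoff, -, hX⟩ | ⟨X, Y, -, -, -, hoff, hX, -, himp⟩
  · exact hs.1 X o' o (fun Z hZ => (hoff Z hZ).symm) ((cpt_congr hoff _ _).mp hX)
  · replace himp : N.MoreImportant X Y o := himp
    have hoff' : ∀ Z, Z ≠ X → Z ≠ Y → o' Z = o Z := fun Z hX hY => (hoff Z hX hY).symm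
    exact hs.of_moreImportant (himp.congr hoff) hoff'
      ((cpt_congr_of_not_cp himp.not_cp hoff _ _).mp hX)

theorem Satisfies.of_transGen_impFlip (hpref : IsPrefOrder pref) (hs : N.Satisfies pref)
    {o o' : (X : V) → D X} (h : TransGen (ImpFlip N) o' o) : pref o o' := by
  induction h with
  | single h => exact hs.of_impFlip h
  | tail _ h ih => exact hpref.2 _ _ _ (hs.of_impFlip h) ih

theorem impFlip_of_cpt {X : V} {o o' : (Z : V) → D Z} (hoff : ∀ Z, Z ≠ X → o Z = o' Z)
    (hX : N.cpt X o (o X) (o' X)) : ImpFlip N o' o :=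
  Or.inl ⟨X, fun Z hZ => (hoff Z hZ).symm, (ne_of_cpt hX).symm,
    (cpt_congr hoff _ _).mp hX⟩

theorem transGen_impFlip_of_moreImportant
    (htotal : ∀ (X : V) (o : (Y : V) → D Y) (a b : D X), a ≠ b →
      N.cpt X o a b ∨ N.cpt X o b a)
    {X Y : V} {o o' : (Z : V) → D Z} (himp : N.MoreImportant X Y o)
    (hoff : ∀ Z, Z ≠ X → Z ≠ Y → o Z = o' Z) (hX : N.cpt X o (o X) (o' X)) :
    TransGen (ImpFlip N) o' o := by
  classical
  have hX' : N.cpt X o' (o X) (o' X) := (cpt_congr_of_not_cp himp.not_cp hoff _ _).mp hX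
  by_cases hY : o Y = o' Y
  · refine .single (impFlip_of_cpt (fun Z hZ => ?_) hX)
    by_cases hZY : Z = Y
    · exact hZY ▸ hY
    · exact hoff Z hZ hZY
  rcases htotal Y o' (o Y) (o' Y) hY with hYup | hYdown
  · set o'' := Function.update o' Y (o Y)
    have hYY : o'' Y = o Y := Function.update_self _ _ _
    have hoff'' : ∀ Z, Z ≠ Y → o'' Z = o' Z := fun Z hZ => Function.update_of_ne hZ _ _
    have hflipY : ImpFlip N o' o'' := by
      refine impFlip_of_cpt hoff'' ?_
      rwa [hYY, cpt_congr hoff'']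
    have hflipX : ImpFlip N o'' o := by
      refine impFlip_of_cpt (X := X) (fun Z hZ => ?_) ?_
      · by_cases hZY : Z = Y
        · exact hZY ▸ hYY.symm
        · rw [hoff'' Z hZY]; exact hoff Z hZ hZY
      · rwa [hoff'' X himp.ne]
    exact .tail (.single hflipY) hflipX
  · exact .single (Or.inr ⟨X, Y, himp.ne, (ne_of_cpt hX').symm, Ne.symm hY,
      fun Z hZX hZY => (hoff Z hZX hZY).symm, hX', hYdown, himp.congr hoff⟩)

theorem satisfies_flip_transGen_impFlip
    (htotal : ∀ (X : V) (o : (Y : V) → D Y) (a b : D X), a ≠ b →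
      N.cpt X o a b ∨ N.cpt X o b a) :
    N.Satisfies (flip (TransGen (ImpFlip N))) :=
  ⟨fun _ _ _ hoff hX => .single (impFlip_of_cpt hoff hX),
    fun _ _ _ _ hi hoff hX => transGen_impFlip_of_moreImportant htotal (Or.inl hi) hoff hX,
    fun _ _ _ _ hc hoff hX => transGen_impFlip_of_moreImportant htotal (Or.inr hc) hoff hX⟩

theorem Satisfiable.isPrefOrder_flip_transGen_impFlip (hsat : N.Satisfiable) :
    IsPrefOrder (flip (TransGen (ImpFlip N))) := by
  obtain ⟨pref, hpref, hs⟩ := hsat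
  exact ⟨fun o h => hpref.1 o (hs.of_transGen_impFlip hpref h),
    fun _ _ _ hab hbc => hbc.trans hab⟩

end TCPNet

open TCPNet in
theorem stmt14_general
    (N : TCPNet V D) (hsat : N.Satisfiable)
    (htotal : ∀ (X : V) (o : (Y : V) → D Y) (a b : D X), a ≠ b →
      N.cpt X o a b ∨ N.cpt X o b a)
    (o o' : (X : V) → D X) :
    N.Entails o o' ↔ Relation.TransGen (ImpFlip N) o' o :=
  ⟨fun h => h _ hsat.isPrefOrder_flip_transGen_impFlip (satisfies_flip_transGen_impFlip htotal),
    fun h _ hpref hs => hs.of_transGen_impFlip hpref h⟩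

/-- for a satisfiable TCP-net with strictly totally ordered
CPTs, `N ⊨ o ≻ o'` iff there is an improving flipping sequence from `o'` to
`o`. -/
theorem stmt14 [Fintype V] [∀ X, Fintype (D X)] [∀ X, Nontrivial (D X)]
    (N : TCPNet V D) (hsat : N.Satisfiable)
    (htotal : ∀ (X : V) (o : (Y : V) → D Y) (a b : D X), a ≠ b →
      N.cpt X o a b ∨ N.cpt X o b a)
    (o o' : (X : V) → D X) :
    N.Entails o o' ↔ Relation.TransGen (ImpFlip N) o' o :=
  stmt14_general N hsat htotal o o'
end
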